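/- arXiv:0710.0071 — 11 statements merged into one kernel-verified Lean document; each statement's English description precedes it below -/
import Mathlib

section
/- If u : ℝ³ → ℝ is a smooth solution of the ZK equation and g : ℝ → ℝ is smooth, then for every ε ∈ ℝ the function ũ(t,x,y) = u(t, x - ε g(t), y) - ε g'(t) is also a solution of the ZK equation. -/
noncomputable def ZK (u : ℝ → ℝ → ℝ → ℝ) (t x y : ℝ) : ℝ :=
  deriv (fun s => deriv (fun x' => u s x' y) x) t
  - (deriv (fun x' => u t x' y) x) ^ 2
  - u t x y * deriv (fun x' => deriv (fun x'' => u t x'' y) x') x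
  - deriv (fun y' => deriv (fun y'' => u t x y'') y') y

/-- Directional derivative chain rule along a curve. -/
lemma zk_key {F : ℝ × ℝ × ℝ → ℝ} (hF : ContDiff ℝ (⊤ : ℕ∞) F) {c : ℝ → ℝ × ℝ × ℝ}
    {c' : ℝ × ℝ × ℝ} {s : ℝ} (hc : HasDerivAt c c' s) :
    HasDerivAt (fun r => F (c r)) (fderiv ℝ F (c s) c') s :=
  (hF.differentiable (by simp) (c s)).hasFDerivAt.comp_hasDerivAt s hc

/-- The directional derivative of a smooth function is smooth. -/
lemma zk_pd_smooth {F : ℝ × ℝ × ℝ → ℝ} (hF : ContDiff ℝ (⊤ : ℕ∞) F) (w : ℝ × ℝ × ℝ) :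
    ContDiff ℝ (⊤ : ℕ∞) (fun p => fderiv ℝ F p w) :=
  (hF.fderiv_right (by simp)).clm_apply contDiff_const

theorem stmt1 (u : ℝ → ℝ → ℝ → ℝ) (g : ℝ → ℝ)
    (hu : ContDiff ℝ (⊤ : ℕ∞) fun p : ℝ × ℝ × ℝ => u p.1 p.2.1 p.2.2)
    (hg : ContDiff ℝ (⊤ : ℕ∞) g)
    (hsol : ∀ t x y : ℝ, ZK u t x y = 0) (ε : ℝ) :
    ∀ t x y : ℝ,
      ZK (fun t x y => u t (x - ε * g t) y - ε * deriv g t) t x y = 0 := by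
  intro t x y
  set U : ℝ × ℝ × ℝ → ℝ := fun p => u p.1 p.2.1 p.2.2 with hU
  set Ux : ℝ × ℝ × ℝ → ℝ := fun p => fderiv ℝ U p (0, 1, 0) with hUx
  set Uy : ℝ × ℝ × ℝ → ℝ := fun p => fderiv ℝ U p (0, 0, 1) with hUy
  have hUxs : ContDiff ℝ (⊤ : ℕ∞) Ux := zk_pd_smooth hu _
  have hUys : ContDiff ℝ (⊤ : ℕ∞) Uy := zk_pd_smooth hu _
  -- first order x-derivatives of u
  have h1 : ∀ s X Y : ℝ, deriv (fun x' => u s x' Y) X = Ux (s, X, Y) := by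
    intro s X Y
    have hc : HasDerivAt (fun x' : ℝ => ((s, x', Y) : ℝ × ℝ × ℝ)) (0, 1, 0) X :=
      (hasDerivAt_const X s).prodMk ((hasDerivAt_id X).prodMk (hasDerivAt_const X Y))
    exact (zk_key hu hc).deriv
  -- y-derivatives
  have h2 : ∀ s X Y : ℝ, deriv (fun y'' => u s X y'') Y = Uy (s, X, Y) := by
    intro s X Y
    have hc : HasDerivAt (fun y'' : ℝ => ((s, X, y'') : ℝ × ℝ × ℝ)) (0, 0, 1) Y :=
      (hasDerivAt_const Y s).prodMk ((hasDerivAt_const Y X).prodMk (hasDerivAt_id Y))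
    exact (zk_key hu hc).deriv
  -- ZK u rewritten through fderiv
  have hZK : ∀ s X Y : ℝ,
      fderiv ℝ Ux (s, X, Y) (1, 0, 0) - (Ux (s, X, Y)) ^ 2
        - u s X Y * fderiv ℝ Ux (s, X, Y) (0, 1, 0)
        - fderiv ℝ Uy (s, X, Y) (0, 0, 1) = 0 := by
    intro s X Y
    have e1 : deriv (fun r => deriv (fun x' => u r x' Y) X) s
        = fderiv ℝ Ux (s, X, Y) (1, 0, 0) := by
      have heq : (fun r => deriv (fun x' => u r x' Y) X) = fun r => Ux (r, X, Y) := by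
        funext r; exact h1 r X Y
      rw [heq]
      have hc : HasDerivAt (fun r : ℝ => ((r, X, Y) : ℝ × ℝ × ℝ)) (1, 0, 0) s :=
        (hasDerivAt_id s).prodMk ((hasDerivAt_const s X).prodMk (hasDerivAt_const s Y))
      exact (zk_key hUxs hc).deriv
    have e2 : deriv (fun x' => deriv (fun x'' => u s x'' Y) x') X
        = fderiv ℝ Ux (s, X, Y) (0, 1, 0) := by
      have heq : (fun x' => deriv (fun x'' => u s x'' Y) x') = fun x' => Ux (s, x', Y) := by
        funext x'; exact h1 s x' Y
      rw [heq]
      have hc : HasDerivAt (fun x' : ℝ => ((s, x', Y) : ℝ × ℝ × ℝ)) (0, 1, 0) X :=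
        (hasDerivAt_const X s).prodMk ((hasDerivAt_id X).prodMk (hasDerivAt_const X Y))
      exact (zk_key hUxs hc).deriv
    have e3 : deriv (fun y' => deriv (fun y'' => u s X y'') y') Y
        = fderiv ℝ Uy (s, X, Y) (0, 0, 1) := by
      have heq : (fun y' => deriv (fun y'' => u s X y'') y') = fun y' => Uy (s, X, y') := by
        funext y'; exact h2 s X y'
      rw [heq]
      have hc : HasDerivAt (fun y' : ℝ => ((s, X, y') : ℝ × ℝ × ℝ)) (0, 0, 1) Y :=
        (hasDerivAt_const Y s).prodMk ((hasDerivAt_const Y X).prodMk (hasDerivAt_id Y))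
      exact (zk_key hUys hc).deriv
    have := hsol s X Y
    rw [ZK, e1, h1 s X Y, e2, e3] at this
    exact this
  -- now the transformed function
  set q : ℝ × ℝ × ℝ := (t, x - ε * g t, y) with hq
  have hg' : ∀ s : ℝ, HasDerivAt (fun r => ε * g r) (ε * deriv g s) s :=
    fun s => ((hg.differentiable (by simp) s).hasDerivAt).const_mul ε
  -- inner x-derivative of the shifted function
  have v1 : ∀ s X Y : ℝ,
      deriv (fun x' => u s (x' - ε * g s) Y - ε * deriv g s) X
        = Ux (s, X - ε * g s, Y) := by
    intro s X Y
    have hc : HasDerivAt (fun x' : ℝ => ((s, x' - ε * g s, Y) : ℝ × ℝ × ℝ)) (0, 1, 0) X :=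
      (hasDerivAt_const X s).prodMk (((hasDerivAt_id X).sub_const _).prodMk (hasDerivAt_const X Y))
    exact ((zk_key hu hc).sub_const _).deriv
  -- mixed tx derivative of the shifted function
  have v2 : deriv (fun r => Ux (r, x - ε * g r, y)) t
      = fderiv ℝ Ux q (1, 0 - ε * deriv g t, 0) := by
    have hc : HasDerivAt (fun r : ℝ => ((r, x - ε * g r, y) : ℝ × ℝ × ℝ))
        (1, 0 - ε * deriv g t, 0) t :=
      (hasDerivAt_id t).prodMk (((hasDerivAt_const t x).sub (hg' t)).prodMk (hasDerivAt_const t y))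
    exact (zk_key hUxs hc).deriv
  have vsplit : fderiv ℝ Ux q (1, 0 - ε * deriv g t, 0)
      = fderiv ℝ Ux q (1, 0, 0) - (ε * deriv g t) * fderiv ℝ Ux q (0, 1, 0) := by
    have hv : ((1, 0 - ε * deriv g t, 0) : ℝ × ℝ × ℝ)
        = (1, 0, 0) + (-(ε * deriv g t)) • ((0, 1, 0) : ℝ × ℝ × ℝ) := by
      simp [Prod.ext_iff]
    rw [hv, map_add, map_smul]
    simp [smul_eq_mul]; ring
  -- second x-derivative
  have v3 : deriv (fun x' => Ux (t, x' - ε * g t, y)) x = fderiv ℝ Ux q (0, 1, 0) := by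
    have hc : HasDerivAt (fun x' : ℝ => ((t, x' - ε * g t, y) : ℝ × ℝ × ℝ)) (0, 1, 0) x :=
      (hasDerivAt_const x t).prodMk (((hasDerivAt_id x).sub_const _).prodMk (hasDerivAt_const x y))
    exact (zk_key hUxs hc).deriv
  -- y-derivatives
  have v4 : ∀ Y : ℝ, deriv (fun y'' => u t (x - ε * g t) y'' - ε * deriv g t) Y
      = Uy (t, x - ε * g t, Y) := by
    intro Y
    have hc : HasDerivAt (fun y'' : ℝ => ((t, x - ε * g t, y'') : ℝ × ℝ × ℝ)) (0, 0, 1) Y :=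
      (hasDerivAt_const Y t).prodMk ((hasDerivAt_const Y (x - ε * g t)).prodMk (hasDerivAt_id Y))
    exact ((zk_key hu hc).sub_const _).deriv
  have v5 : deriv (fun y' => Uy (t, x - ε * g t, y')) y = fderiv ℝ Uy q (0, 0, 1) := by
    have hc : HasDerivAt (fun y' : ℝ => ((t, x - ε * g t, y') : ℝ × ℝ × ℝ)) (0, 0, 1) y :=
      (hasDerivAt_const y t).prodMk ((hasDerivAt_const y (x - ε * g t)).prodMk (hasDerivAt_id y))
    exact (zk_key hUys hc).deriv
  -- assemble
  rw [ZK]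
  have e1 : (fun r => deriv (fun x' => u r (x' - ε * g r) y - ε * deriv g r) x)
      = fun r => Ux (r, x - ε * g r, y) := by
    funext r; exact v1 r x y
  have e2 : (fun x' => deriv (fun x'' => u t (x'' - ε * g t) y - ε * deriv g t) x')
      = fun x' => Ux (t, x' - ε * g t, y) := by
    funext x'; exact v1 t x' y
  have e3 : (fun y' => deriv (fun y'' => u t (x - ε * g t) y'' - ε * deriv g t) y')
      = fun y' => Uy (t, x - ε * g t, y') := by
    funext y'; exact v4 y'
  rw [e1, v2, vsplit, v1 t x y, e2, v3, e3, v5]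
  have hz := hZK t (x - ε * g t) y
  linear_combination hz
end

section
/- If u : ℝ³ → ℝ is a smooth solution of the ZK equation and g, h : ℝ → ℝ are smooth, then for every ε ∈ ℝ the function ũ(t,x,y) = u(t, x - gε + ε(-y + hε)h', y - 2hε) - ε(g' + (y - hε)h'') (with g, h, h', h'' evaluated at t) is also a solution of the ZK equation. -/
section helpers

lemma deriv_comp_curve {U : ℝ × ℝ × ℝ → ℝ} (hU : ContDiff ℝ (⊤ : ℕ∞) U) {γ : ℝ → ℝ × ℝ × ℝ}
    {v : ℝ × ℝ × ℝ} {s : ℝ} (hγ : HasDerivAt γ v s) :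
    deriv (fun r => U (γ r)) s = fderiv ℝ U (γ s) v :=
  ((hU.differentiable (by simp) (γ s)).hasFDerivAt.comp_hasDerivAt s hγ).deriv

lemma contDiff_pd {U : ℝ × ℝ × ℝ → ℝ} (hU : ContDiff ℝ (⊤ : ℕ∞) U) (v : ℝ × ℝ × ℝ) :
    ContDiff ℝ (⊤ : ℕ∞) (fun p => fderiv ℝ U p v) :=
  (hU.fderiv_right (by simp)).clm_apply contDiff_const

lemma pd_symm {U : ℝ × ℝ × ℝ → ℝ} (hU : ContDiff ℝ (⊤ : ℕ∞) U) (p v w : ℝ × ℝ × ℝ) :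
    fderiv ℝ (fun q => fderiv ℝ U q v) p w = fderiv ℝ (fun q => fderiv ℝ U q w) p v := by
  have hd : ∀ q, HasFDerivAt U (fderiv ℝ U q) q := fun q =>
    (hU.differentiable (by simp) q).hasFDerivAt
  have hD : DifferentiableAt ℝ (fderiv ℝ U) p :=
    ((hU.fderiv_right (m := (⊤ : ℕ∞)) (by simp)).differentiable (by simp)) p
  have hsymm := second_derivative_symmetric hd hD.hasFDerivAt v w
  rw [fderiv_clm_apply hD (differentiableAt_const v),
      fderiv_clm_apply hD (differentiableAt_const w)]
  simp [hsymm]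

lemma clm_decomp (L : ℝ × ℝ × ℝ →L[ℝ] ℝ) (a b c : ℝ) :
    L (a, b, c) = a * L (1, 0, 0) + b * L (0, 1, 0) + c * L (0, 0, 1) := by
  have : (a, b, c) = a • ((1:ℝ), (0:ℝ), (0:ℝ)) + b • ((0:ℝ), (1:ℝ), (0:ℝ))
      + c • ((0:ℝ), (0:ℝ), (1:ℝ)) := by
    simp [Prod.ext_iff]
  rw [this, map_add, map_add, map_smul, map_smul, map_smul, smul_eq_mul, smul_eq_mul, smul_eq_mul]

end helpers

theorem stmt2 (u : ℝ → ℝ → ℝ → ℝ) (g h : ℝ → ℝ)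
    (hu : ContDiff ℝ (⊤ : ℕ∞) fun p : ℝ × ℝ × ℝ => u p.1 p.2.1 p.2.2)
    (hg : ContDiff ℝ (⊤ : ℕ∞) g) (hh : ContDiff ℝ (⊤ : ℕ∞) h)
    (hsol : ∀ t x y : ℝ, ZK u t x y = 0) (ε : ℝ) :
    ∀ t x y : ℝ,
      ZK (fun t x y =>
        u t (x - g t * ε + ε * (-y + h t * ε) * deriv h t) (y - 2 * h t * ε)
          - ε * (deriv g t + (y - h t * ε) * deriv (deriv h) t)) t x y = 0 := by
  intro t x y
  set U : ℝ × ℝ × ℝ → ℝ := fun p => u p.1 p.2.1 p.2.2 with hUdef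
  have hU : ContDiff ℝ (⊤ : ℕ∞) U := hu
  -- derivatives of g, h
  have hgd : HasDerivAt g (deriv g t) t := (hg.differentiable (by simp) t).hasDerivAt
  have hhd : ∀ s : ℝ, HasDerivAt h (deriv h s) s := fun s =>
    (hh.differentiable (by simp) s).hasDerivAt
  have hh'c : ContDiff ℝ (⊤ : ℕ∞) (deriv h) := (contDiff_infty_iff_deriv.mp (hh.of_le (by simp))).2
  have hh'd : HasDerivAt (deriv h) (deriv (deriv h) t) t :=
    (hh'c.differentiable (by simp) t).hasDerivAt
  -- the solution equation in fderiv form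
  have p1 : ∀ a' b' c' : ℝ, deriv (fun x' => u a' x' c') b'
      = fderiv ℝ U (a', b', c') ((0:ℝ), (1:ℝ), (0:ℝ)) := fun a' b' c' =>
    ((hU.differentiable (by simp) _).hasFDerivAt.comp_hasDerivAt b'
      ((hasDerivAt_const b' a').prodMk ((hasDerivAt_id b').prodMk (hasDerivAt_const b' c')))).deriv
  have p4 : ∀ a' b' c' : ℝ, deriv (fun y'' => u a' b' y'') c'
      = fderiv ℝ U (a', b', c') ((0:ℝ), (0:ℝ), (1:ℝ)) := fun a' b' c' =>
    ((hU.differentiable (by simp) _).hasFDerivAt.comp_hasDerivAt c'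
      ((hasDerivAt_const c' a').prodMk ((hasDerivAt_const c' b').prodMk (hasDerivAt_id c')))).deriv
  have hs : ∀ a b c : ℝ,
      fderiv ℝ (fun q => fderiv ℝ U q ((0:ℝ), (1:ℝ), (0:ℝ))) (a, b, c) ((1:ℝ), (0:ℝ), (0:ℝ))
      - fderiv ℝ U (a, b, c) ((0:ℝ), (1:ℝ), (0:ℝ)) ^ 2
      - u a b c * fderiv ℝ (fun q => fderiv ℝ U q ((0:ℝ), (1:ℝ), (0:ℝ))) (a, b, c)
          ((0:ℝ), (1:ℝ), (0:ℝ))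
      - fderiv ℝ (fun q => fderiv ℝ U q ((0:ℝ), (0:ℝ), (1:ℝ))) (a, b, c)
          ((0:ℝ), (0:ℝ), (1:ℝ)) = 0 := by
    intro a b c
    have hZ := hsol a b c
    simp only [ZK] at hZ
    simp only [p1, p4] at hZ
    have q1 : deriv (fun s => fderiv ℝ U (s, b, c) ((0:ℝ), (1:ℝ), (0:ℝ))) a
        = fderiv ℝ (fun q => fderiv ℝ U q ((0:ℝ), (1:ℝ), (0:ℝ))) (a, b, c)
          ((1:ℝ), (0:ℝ), (0:ℝ)) :=
      (((contDiff_pd hU _).differentiable (by simp) _).hasFDerivAt.comp_hasDerivAt a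
        ((hasDerivAt_id a).prodMk ((hasDerivAt_const a b).prodMk (hasDerivAt_const a c)))).deriv
    have q3 : deriv (fun x' => fderiv ℝ U (a, x', c) ((0:ℝ), (1:ℝ), (0:ℝ))) b
        = fderiv ℝ (fun q => fderiv ℝ U q ((0:ℝ), (1:ℝ), (0:ℝ))) (a, b, c)
          ((0:ℝ), (1:ℝ), (0:ℝ)) :=
      (((contDiff_pd hU _).differentiable (by simp) _).hasFDerivAt.comp_hasDerivAt b
        ((hasDerivAt_const b a).prodMk ((hasDerivAt_id b).prodMk (hasDerivAt_const b c)))).deriv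
    have q4 : deriv (fun y' => fderiv ℝ U (a, b, y') ((0:ℝ), (0:ℝ), (1:ℝ))) c
        = fderiv ℝ (fun q => fderiv ℝ U q ((0:ℝ), (0:ℝ), (1:ℝ))) (a, b, c)
          ((0:ℝ), (0:ℝ), (1:ℝ)) :=
      (((contDiff_pd hU _).differentiable (by simp) _).hasFDerivAt.comp_hasDerivAt c
        ((hasDerivAt_const c a).prodMk ((hasDerivAt_const c b).prodMk (hasDerivAt_id c)))).deriv
    rw [q1, q3, q4] at hZ
    exact hZ
  -- first x-derivative of the transformed function
  have hx : ∀ s x' y' : ℝ,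
      deriv (fun z =>
        u s (z - g s * ε + ε * (-y' + h s * ε) * deriv h s) (y' - 2 * h s * ε)
          - ε * (deriv g s + (y' - h s * ε) * deriv (deriv h) s)) x'
      = fderiv ℝ U (s, x' - g s * ε + ε * (-y' + h s * ε) * deriv h s, y' - 2 * h s * ε)
          ((0:ℝ), (1:ℝ), (0:ℝ)) := fun s x' y' =>
    (((hU.differentiable (by simp) _).hasFDerivAt.comp_hasDerivAt x'
      ((hasDerivAt_const x' s).prodMk
        ((((hasDerivAt_id x').sub_const (g s * ε)).add_const
            (ε * (-y' + h s * ε) * deriv h s)).prodMk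
          (hasDerivAt_const x' (y' - 2 * h s * ε))))).sub_const
      (ε * (deriv g s + (y' - h s * ε) * deriv (deriv h) s))).deriv
  -- first y-derivative of the transformed function
  have hy : ∀ y' : ℝ,
      deriv (fun z =>
        u t (x - g t * ε + ε * (-z + h t * ε) * deriv h t) (z - 2 * h t * ε)
          - ε * (deriv g t + (z - h t * ε) * deriv (deriv h) t)) y'
      = fderiv ℝ U (t, x - g t * ε + ε * (-y' + h t * ε) * deriv h t, y' - 2 * h t * ε)
          ((0:ℝ), ε * -1 * deriv h t, (1:ℝ)) - ε * (1 * deriv (deriv h) t) := fun y' =>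
    (((hU.differentiable (by simp) _).hasFDerivAt.comp_hasDerivAt y'
      ((hasDerivAt_const y' t).prodMk
        (((((((hasDerivAt_id y').neg.add_const (h t * ε)).const_mul ε).mul_const
              (deriv h t)).const_add (x - g t * ε))).prodMk
          ((hasDerivAt_id y').sub_const (2 * h t * ε))))).sub
      (((((hasDerivAt_id y').sub_const (h t * ε)).mul_const
          (deriv (deriv h) t)).const_add (deriv g t)).const_mul ε)).deriv
  simp only [ZK]
  simp only [hx, hy]
  -- t-derivative of the x-derivative
  have hαt : HasDerivAt (fun s => x - g s * ε + ε * (-y + h s * ε) * deriv h s)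
      (0 - deriv g t * ε
        + (ε * (deriv h t * ε) * deriv h t + ε * (-y + h t * ε) * deriv (deriv h) t)) t :=
    ((hasDerivAt_const t x).sub (hgd.mul_const ε)).add
      (((((hhd t).mul_const ε).const_add (-y)).const_mul ε).mul hh'd)
  have hβt : HasDerivAt (fun s => y - 2 * h s * ε) (0 - 2 * deriv h t * ε) t :=
    (hasDerivAt_const t y).sub (((hhd t).const_mul 2).mul_const ε)
  have e1 : deriv (fun s =>
      fderiv ℝ U (s, x - g s * ε + ε * (-y + h s * ε) * deriv h s, y - 2 * h s * ε)
        ((0:ℝ), (1:ℝ), (0:ℝ))) t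
      = fderiv ℝ (fun q => fderiv ℝ U q ((0:ℝ), (1:ℝ), (0:ℝ)))
          (t, x - g t * ε + ε * (-y + h t * ε) * deriv h t, y - 2 * h t * ε)
          ((1:ℝ),
            0 - deriv g t * ε
              + (ε * (deriv h t * ε) * deriv h t + ε * (-y + h t * ε) * deriv (deriv h) t),
            0 - 2 * deriv h t * ε) :=
    (((contDiff_pd hU _).differentiable (by simp) _).hasFDerivAt.comp_hasDerivAt t
      ((hasDerivAt_id t).prodMk (hαt.prodMk hβt))).deriv
  -- second x-derivative
  have e3 : deriv (fun x' =>
      fderiv ℝ U (t, x' - g t * ε + ε * (-y + h t * ε) * deriv h t, y - 2 * h t * ε)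
        ((0:ℝ), (1:ℝ), (0:ℝ))) x
      = fderiv ℝ (fun q => fderiv ℝ U q ((0:ℝ), (1:ℝ), (0:ℝ)))
          (t, x - g t * ε + ε * (-y + h t * ε) * deriv h t, y - 2 * h t * ε)
          ((0:ℝ), (1:ℝ), (0:ℝ)) :=
    (((contDiff_pd hU _).differentiable (by simp) _).hasFDerivAt.comp_hasDerivAt x
      ((hasDerivAt_const x t).prodMk
        ((((hasDerivAt_id x).sub_const (g t * ε)).add_const
            (ε * (-y + h t * ε) * deriv h t)).prodMk
          (hasDerivAt_const x (y - 2 * h t * ε))))).deriv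
  -- decompose the y-direction vector
  have hw : ∀ q : ℝ × ℝ × ℝ,
      fderiv ℝ U q ((0:ℝ), ε * -1 * deriv h t, (1:ℝ))
      = 0 * fderiv ℝ U q ((1:ℝ), (0:ℝ), (0:ℝ))
        + ε * -1 * deriv h t * fderiv ℝ U q ((0:ℝ), (1:ℝ), (0:ℝ))
        + 1 * fderiv ℝ U q ((0:ℝ), (0:ℝ), (1:ℝ)) := fun q =>
    clm_decomp (fderiv ℝ U q) 0 (ε * -1 * deriv h t) 1
  simp only [hw]
  -- second y-derivative
  have hQ : HasDerivAt (fun y' =>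
      ((t, x - g t * ε + ε * (-y' + h t * ε) * deriv h t, y' - 2 * h t * ε) : ℝ × ℝ × ℝ))
      ((0:ℝ), ε * -1 * deriv h t, (1:ℝ)) y :=
    (hasDerivAt_const y t).prodMk
      ((((((hasDerivAt_id y).neg.add_const (h t * ε)).const_mul ε).mul_const
          (deriv h t)).const_add (x - g t * ε)).prodMk
        ((hasDerivAt_id y).sub_const (2 * h t * ε)))
  have hD1Q : HasDerivAt (fun y' =>
      fderiv ℝ U (t, x - g t * ε + ε * (-y' + h t * ε) * deriv h t, y' - 2 * h t * ε)
        ((1:ℝ), (0:ℝ), (0:ℝ)))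
      (fderiv ℝ (fun q => fderiv ℝ U q ((1:ℝ), (0:ℝ), (0:ℝ)))
        (t, x - g t * ε + ε * (-y + h t * ε) * deriv h t, y - 2 * h t * ε)
        ((0:ℝ), ε * -1 * deriv h t, (1:ℝ))) y :=
    ((contDiff_pd hU _).differentiable (by simp) _).hasFDerivAt.comp_hasDerivAt y hQ
  have hD2Q : HasDerivAt (fun y' =>
      fderiv ℝ U (t, x - g t * ε + ε * (-y' + h t * ε) * deriv h t, y' - 2 * h t * ε)
        ((0:ℝ), (1:ℝ), (0:ℝ)))
      (fderiv ℝ (fun q => fderiv ℝ U q ((0:ℝ), (1:ℝ), (0:ℝ)))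
        (t, x - g t * ε + ε * (-y + h t * ε) * deriv h t, y - 2 * h t * ε)
        ((0:ℝ), ε * -1 * deriv h t, (1:ℝ))) y :=
    ((contDiff_pd hU _).differentiable (by simp) _).hasFDerivAt.comp_hasDerivAt y hQ
  have hD3Q : HasDerivAt (fun y' =>
      fderiv ℝ U (t, x - g t * ε + ε * (-y' + h t * ε) * deriv h t, y' - 2 * h t * ε)
        ((0:ℝ), (0:ℝ), (1:ℝ)))
      (fderiv ℝ (fun q => fderiv ℝ U q ((0:ℝ), (0:ℝ), (1:ℝ)))
        (t, x - g t * ε + ε * (-y + h t * ε) * deriv h t, y - 2 * h t * ε)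
        ((0:ℝ), ε * -1 * deriv h t, (1:ℝ))) y :=
    ((contDiff_pd hU _).differentiable (by simp) _).hasFDerivAt.comp_hasDerivAt y hQ
  have e4 : deriv (fun y' =>
      0 * fderiv ℝ U (t, x - g t * ε + ε * (-y' + h t * ε) * deriv h t, y' - 2 * h t * ε)
          ((1:ℝ), (0:ℝ), (0:ℝ))
        + ε * -1 * deriv h t
            * fderiv ℝ U (t, x - g t * ε + ε * (-y' + h t * ε) * deriv h t, y' - 2 * h t * ε)
              ((0:ℝ), (1:ℝ), (0:ℝ))
        + 1 * fderiv ℝ U (t, x - g t * ε + ε * (-y' + h t * ε) * deriv h t, y' - 2 * h t * ε)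
              ((0:ℝ), (0:ℝ), (1:ℝ))
        - ε * (1 * deriv (deriv h) t)) y
      = 0 * fderiv ℝ (fun q => fderiv ℝ U q ((1:ℝ), (0:ℝ), (0:ℝ)))
            (t, x - g t * ε + ε * (-y + h t * ε) * deriv h t, y - 2 * h t * ε)
            ((0:ℝ), ε * -1 * deriv h t, (1:ℝ))
        + ε * -1 * deriv h t
            * fderiv ℝ (fun q => fderiv ℝ U q ((0:ℝ), (1:ℝ), (0:ℝ)))
              (t, x - g t * ε + ε * (-y + h t * ε) * deriv h t, y - 2 * h t * ε)
              ((0:ℝ), ε * -1 * deriv h t, (1:ℝ))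
        + 1 * fderiv ℝ (fun q => fderiv ℝ U q ((0:ℝ), (0:ℝ), (1:ℝ)))
              (t, x - g t * ε + ε * (-y + h t * ε) * deriv h t, y - 2 * h t * ε)
              ((0:ℝ), ε * -1 * deriv h t, (1:ℝ)) :=
    ((((hD1Q.const_mul 0).add (hD2Q.const_mul (ε * -1 * deriv h t))).add
        (hD3Q.const_mul 1)).sub_const (ε * (1 * deriv (deriv h) t))).deriv
  rw [e1, e3, e4]
  -- decompose remaining direction vectors
  rw [clm_decomp (fderiv ℝ (fun q => fderiv ℝ U q ((0:ℝ), (1:ℝ), (0:ℝ)))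
      (t, x - g t * ε + ε * (-y + h t * ε) * deriv h t, y - 2 * h t * ε)) 1
      (0 - deriv g t * ε
        + (ε * (deriv h t * ε) * deriv h t + ε * (-y + h t * ε) * deriv (deriv h) t))
      (0 - 2 * deriv h t * ε)]
  rw [clm_decomp (fderiv ℝ (fun q => fderiv ℝ U q ((1:ℝ), (0:ℝ), (0:ℝ)))
      (t, x - g t * ε + ε * (-y + h t * ε) * deriv h t, y - 2 * h t * ε)) 0
      (ε * -1 * deriv h t) 1]
  rw [clm_decomp (fderiv ℝ (fun q => fderiv ℝ U q ((0:ℝ), (1:ℝ), (0:ℝ)))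
      (t, x - g t * ε + ε * (-y + h t * ε) * deriv h t, y - 2 * h t * ε)) 0
      (ε * -1 * deriv h t) 1]
  rw [clm_decomp (fderiv ℝ (fun q => fderiv ℝ U q ((0:ℝ), (0:ℝ), (1:ℝ)))
      (t, x - g t * ε + ε * (-y + h t * ε) * deriv h t, y - 2 * h t * ε)) 0
      (ε * -1 * deriv h t) 1]
  rw [pd_symm hU (t, x - g t * ε + ε * (-y + h t * ε) * deriv h t, y - 2 * h t * ε)
      ((0:ℝ), (1:ℝ), (0:ℝ)) ((0:ℝ), (0:ℝ), (1:ℝ))]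
  linear_combination hs t (x - g t * ε + ε * (-y + h t * ε) * deriv h t) (y - 2 * h t * ε)
end

section
/- For smooth functions f₁, f₂ : ℝ → ℝ, the vector fields z_{f_i} = f_i ∂_t + (1/6)(2x f_i' + y² f_i'') ∂_x + (2y/3) f_i' ∂_y + (1/6)(-4u f_i' - 2x f_i'' - y² f_i''') ∂_u on ℝ⁴ (coordinates t,x,y,u) satisfy the commutation relation [z_{f₁}, z_{f₂}] = z_{f₁ f₂' - f₁' f₂}. -/
noncomputable section

abbrev P4 := ℝ × ℝ × ℝ × ℝ

def pdT (F : P4 → ℝ) (p : P4) : ℝ := deriv (fun s => F (s, p.2.1, p.2.2.1, p.2.2.2)) p.1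
def pdX (F : P4 → ℝ) (p : P4) : ℝ := deriv (fun s => F (p.1, s, p.2.2.1, p.2.2.2)) p.2.1
def pdY (F : P4 → ℝ) (p : P4) : ℝ := deriv (fun s => F (p.1, p.2.1, s, p.2.2.2)) p.2.2.1
def pdU (F : P4 → ℝ) (p : P4) : ℝ := deriv (fun s => F (p.1, p.2.1, p.2.2.1, s)) p.2.2.2

/-- The generator z_f of the ZK symmetry algebra, acting as a derivation. -/
def Zf (f : ℝ → ℝ) (F : P4 → ℝ) (p : P4) : ℝ :=
  f p.1 * pdT F p
  + (1 / 6) * (2 * p.2.1 * deriv f p.1 + p.2.2.1 ^ 2 * deriv (deriv f) p.1) * pdX F p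
  + (2 * p.2.2.1 / 3) * deriv f p.1 * pdY F p
  + (1 / 6) * (-4 * p.2.2.2 * deriv f p.1 - 2 * p.2.1 * deriv (deriv f) p.1
      - p.2.2.1 ^ 2 * deriv (deriv (deriv f)) p.1) * pdU F p

/-- The generator x_g = g ∂_x - g' ∂_u. -/
def Xg (g : ℝ → ℝ) (F : P4 → ℝ) (p : P4) : ℝ :=
  g p.1 * pdX F p - deriv g p.1 * pdU F p

/-- The generator y_h = (1/2) y h' ∂_x + h ∂_y - (1/2) y h'' ∂_u. -/
def Yh (h : ℝ → ℝ) (F : P4 → ℝ) (p : P4) : ℝ :=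
  (1 / 2) * p.2.2.1 * deriv h p.1 * pdX F p + h p.1 * pdY F p
  - (1 / 2) * p.2.2.1 * deriv (deriv h) p.1 * pdU F p

end

noncomputable section Aux

lemma pdT_eq' {F : P4 → ℝ} {p : P4} (hF : DifferentiableAt ℝ F p) :
    pdT F p = fderiv ℝ F p (1, 0, 0, 0) := by
  have hι : HasDerivAt (fun s : ℝ => ((s, p.2.1, p.2.2.1, p.2.2.2) : P4)) (1, 0, 0, 0) p.1 :=
    (hasDerivAt_id p.1).prodMk ((hasDerivAt_const p.1 _))
  exact (hF.hasFDerivAt.comp_hasDerivAt (l := F) p.1 hι).deriv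

lemma pdX_eq' {F : P4 → ℝ} {p : P4} (hF : DifferentiableAt ℝ F p) :
    pdX F p = fderiv ℝ F p (0, 1, 0, 0) := by
  have hι : HasDerivAt (fun s : ℝ => ((p.1, s, p.2.2.1, p.2.2.2) : P4)) (0, 1, 0, 0) p.2.1 :=
    (hasDerivAt_const p.2.1 _).prodMk ((hasDerivAt_id p.2.1).prodMk (hasDerivAt_const p.2.1 _))
  exact (hF.hasFDerivAt.comp_hasDerivAt (l := F) p.2.1 hι).deriv

lemma pdY_eq' {F : P4 → ℝ} {p : P4} (hF : DifferentiableAt ℝ F p) :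
    pdY F p = fderiv ℝ F p (0, 0, 1, 0) := by
  have hι : HasDerivAt (fun s : ℝ => ((p.1, p.2.1, s, p.2.2.2) : P4)) (0, 0, 1, 0) p.2.2.1 :=
    (hasDerivAt_const _ _).prodMk ((hasDerivAt_const _ _).prodMk
      ((hasDerivAt_id p.2.2.1).prodMk (hasDerivAt_const _ _)))
  exact (hF.hasFDerivAt.comp_hasDerivAt (l := F) p.2.2.1 hι).deriv

lemma pdU_eq' {F : P4 → ℝ} {p : P4} (hF : DifferentiableAt ℝ F p) :
    pdU F p = fderiv ℝ F p (0, 0, 0, 1) := by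
  have hι : HasDerivAt (fun s : ℝ => ((p.1, p.2.1, p.2.2.1, s) : P4)) (0, 0, 0, 1) p.2.2.2 :=
    (hasDerivAt_const _ _).prodMk ((hasDerivAt_const _ _).prodMk
      ((hasDerivAt_const _ _).prodMk (hasDerivAt_id p.2.2.2)))
  exact (hF.hasFDerivAt.comp_hasDerivAt (l := F) p.2.2.2 hι).deriv

lemma fderiv_apply_vec {F : P4 → ℝ} {p : P4} (hF : DifferentiableAt ℝ F p) (a b c d : ℝ) :
    fderiv ℝ F p (a, b, c, d)
      = a * pdT F p + b * pdX F p + c * pdY F p + d * pdU F p := by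
  have hv : ((a, b, c, d) : P4)
      = a • ((1:ℝ), (0:ℝ), (0:ℝ), (0:ℝ)) + b • (0, 1, 0, 0) + c • (0, 0, 1, 0)
        + d • (0, 0, 0, 1) := by
    simp [Prod.ext_iff]
  rw [hv, map_add, map_add, map_add, map_smul, map_smul, map_smul, map_smul,
    pdT_eq' hF, pdX_eq' hF, pdY_eq' hF, pdU_eq' hF]
  simp [smul_eq_mul]

/-- The coefficient vector of the vector field `z_f`. -/
def Vf (f : ℝ → ℝ) (p : P4) : P4 :=
  (f p.1,
   (1 / 6) * (2 * p.2.1 * deriv f p.1 + p.2.2.1 * p.2.2.1 * deriv (deriv f) p.1),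
   2 / 3 * p.2.2.1 * deriv f p.1,
   (1 / 6) * (-4 * p.2.2.2 * deriv f p.1 - 2 * p.2.1 * deriv (deriv f) p.1
     - p.2.2.1 * p.2.2.1 * deriv (deriv (deriv f)) p.1))

abbrev πt : P4 →L[ℝ] ℝ := ContinuousLinearMap.fst ℝ ℝ (ℝ × ℝ × ℝ)
abbrev πx : P4 →L[ℝ] ℝ :=
  (ContinuousLinearMap.fst ℝ ℝ (ℝ × ℝ)).comp (ContinuousLinearMap.snd ℝ ℝ (ℝ × ℝ × ℝ))
abbrev πy : P4 →L[ℝ] ℝ :=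
  ((ContinuousLinearMap.fst ℝ ℝ ℝ).comp (ContinuousLinearMap.snd ℝ ℝ (ℝ × ℝ))).comp
    (ContinuousLinearMap.snd ℝ ℝ (ℝ × ℝ × ℝ))
abbrev πu : P4 →L[ℝ] ℝ :=
  ((ContinuousLinearMap.snd ℝ ℝ ℝ).comp (ContinuousLinearMap.snd ℝ ℝ (ℝ × ℝ))).comp
    (ContinuousLinearMap.snd ℝ ℝ (ℝ × ℝ × ℝ))

lemma contDiff_Vf {f : ℝ → ℝ} (hf : ContDiff ℝ (⊤ : ℕ∞) f) : ContDiff ℝ (⊤ : ℕ∞) (Vf f) := by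
  have hd1 : ContDiff ℝ (⊤ : ℕ∞) (deriv f) := (contDiff_infty_iff_deriv.mp hf).2
  have hd2 : ContDiff ℝ (⊤ : ℕ∞) (deriv (deriv f)) := (contDiff_infty_iff_deriv.mp hd1).2
  have hd3 : ContDiff ℝ (⊤ : ℕ∞) (deriv (deriv (deriv f))) := (contDiff_infty_iff_deriv.mp hd2).2
  have ht : ContDiff ℝ (⊤ : ℕ∞) (fun q : P4 => q.1) := contDiff_fst
  have hx : ContDiff ℝ (⊤ : ℕ∞) (fun q : P4 => q.2.1) := contDiff_fst.comp contDiff_snd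
  have hy : ContDiff ℝ (⊤ : ℕ∞) (fun q : P4 => q.2.2.1) :=
    (contDiff_fst.comp contDiff_snd).comp contDiff_snd
  have hu : ContDiff ℝ (⊤ : ℕ∞) (fun q : P4 => q.2.2.2) :=
    (contDiff_snd.comp contDiff_snd).comp contDiff_snd
  refine (hf.comp ht).prodMk (ContDiff.prodMk ?_ (ContDiff.prodMk ?_ ?_))
  · exact contDiff_const.mul ((((contDiff_const.mul hx).mul (hd1.comp ht)).add
      ((hy.mul hy).mul (hd2.comp ht))))
  · exact (contDiff_const.mul hy).mul (hd1.comp ht)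
  · exact contDiff_const.mul (((((contDiff_const.mul hu).mul (hd1.comp ht)).sub
      ((contDiff_const.mul hx).mul (hd2.comp ht))).sub
      ((hy.mul hy).mul (hd3.comp ht))))

lemma fderiv_Vf_apply {f : ℝ → ℝ} (hf : ContDiff ℝ (⊤ : ℕ∞) f) (p w : P4) :
    fderiv ℝ (Vf f) p w
      = (deriv f p.1 * w.1,
         (1 / 6) * ((2 * p.2.1 * deriv (deriv f) p.1
             + p.2.2.1 * p.2.2.1 * deriv (deriv (deriv f)) p.1) * w.1
           + 2 * deriv f p.1 * w.2.1 + 2 * p.2.2.1 * deriv (deriv f) p.1 * w.2.2.1),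
         2 / 3 * (deriv (deriv f) p.1 * p.2.2.1 * w.1 + deriv f p.1 * w.2.2.1),
         (1 / 6) * ((-4 * p.2.2.2 * deriv (deriv f) p.1 - 2 * p.2.1 * deriv (deriv (deriv f)) p.1
             - p.2.2.1 * p.2.2.1 * deriv (deriv (deriv (deriv f)))  p.1) * w.1
           - 4 * deriv f p.1 * w.2.2.2 - 2 * deriv (deriv f) p.1 * w.2.1
           - 2 * p.2.2.1 * deriv (deriv (deriv f)) p.1 * w.2.2.1)) := by
  have hd1 : ContDiff ℝ (⊤ : ℕ∞) (deriv f) := (contDiff_infty_iff_deriv.mp hf).2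
  have hd2 : ContDiff ℝ (⊤ : ℕ∞) (deriv (deriv f)) := (contDiff_infty_iff_deriv.mp hd1).2
  have hd3 : ContDiff ℝ (⊤ : ℕ∞) (deriv (deriv (deriv f))) := (contDiff_infty_iff_deriv.mp hd2).2
  have ht : HasFDerivAt (fun q : P4 => q.1) πt p := πt.hasFDerivAt
  have hx : HasFDerivAt (fun q : P4 => q.2.1) πx p := πx.hasFDerivAt
  have hy : HasFDerivAt (fun q : P4 => q.2.2.1) πy p := πy.hasFDerivAt
  have hu : HasFDerivAt (fun q : P4 => q.2.2.2) πu p := πu.hasFDerivAt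
  have hg1 : HasFDerivAt (fun q : P4 => f q.1) (deriv f p.1 • πt) p :=
    ((hf.differentiable (by simp) p.1).hasDerivAt).comp_hasFDerivAt p ht
  have hg2 : HasFDerivAt (fun q : P4 => deriv f q.1) (deriv (deriv f) p.1 • πt) p :=
    ((hd1.differentiable (by simp) p.1).hasDerivAt).comp_hasFDerivAt p ht
  have hg3 : HasFDerivAt (fun q : P4 => deriv (deriv f) q.1)
      (deriv (deriv (deriv f)) p.1 • πt) p :=
    ((hd2.differentiable (by simp) p.1).hasDerivAt).comp_hasFDerivAt p ht
  have hg4 : HasFDerivAt (fun q : P4 => deriv (deriv (deriv f)) q.1)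
      (deriv (deriv (deriv (deriv f))) p.1 • πt) p :=
    ((hd3.differentiable (by simp) p.1).hasDerivAt).comp_hasFDerivAt p ht
  have h1 := hg1
  have h2 := ((((hx.const_mul 2).mul hg2).add ((hy.mul hy).mul hg3)).const_mul (1/6 : ℝ))
  have h3 := ((hy.const_mul (2/3 : ℝ)).mul hg2)
  have h4 := (((((hu.const_mul (-4)).mul hg2).sub ((hx.const_mul 2).mul hg3)).sub
      ((hy.mul hy).mul hg4)).const_mul (1/6 : ℝ))
  have H : HasFDerivAt (Vf f) _ p := h1.prodMk (h2.prodMk (h3.prodMk h4))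
  rw [H.fderiv]
  simp [ContinuousLinearMap.prod_apply, ContinuousLinearMap.add_apply,
    ContinuousLinearMap.smul_apply, ContinuousLinearMap.sub_apply,
    ContinuousLinearMap.coe_comp', ContinuousLinearMap.coe_fst', ContinuousLinearMap.coe_snd',
    smul_eq_mul]
  exact ⟨by ring, by ring, by ring⟩

lemma Zf_eq' (f : ℝ → ℝ) {F : P4 → ℝ} {p : P4} (hF : DifferentiableAt ℝ F p) :
    Zf f F p = fderiv ℝ F p (Vf f p) := by
  rw [Vf, fderiv_apply_vec hF, Zf]
  ring

lemma deriv_mul_fun {a b : ℝ → ℝ} (ha : Differentiable ℝ a) (hb : Differentiable ℝ b) :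
    deriv (fun t => a t * b t) = fun t => deriv a t * b t + a t * deriv b t :=
  funext fun t => deriv_mul (ha t) (hb t)

lemma deriv_sub_fun {a b : ℝ → ℝ} (ha : Differentiable ℝ a) (hb : Differentiable ℝ b) :
    deriv (fun t => a t - b t) = fun t => deriv a t - deriv b t :=
  funext fun t => deriv_sub (ha t) (hb t)

lemma deriv_add_fun {a b : ℝ → ℝ} (ha : Differentiable ℝ a) (hb : Differentiable ℝ b) :
    deriv (fun t => a t + b t) = fun t => deriv a t + deriv b t :=
  funext fun t => deriv_add (ha t) (hb t)

end Aux

theorem stmt3 (f₁ f₂ : ℝ → ℝ) (hf₁ : ContDiff ℝ (⊤ : ℕ∞) f₁) (hf₂ : ContDiff ℝ (⊤ : ℕ∞) f₂) :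
    ∀ F : P4 → ℝ, ContDiff ℝ (⊤ : ℕ∞) F → ∀ p : P4,
      Zf f₁ (Zf f₂ F) p - Zf f₂ (Zf f₁ F) p
        = Zf (fun t => f₁ t * deriv f₂ t - deriv f₁ t * f₂ t) F p := by
  intro F hF p
  have hs₁ : ContDiff ℝ (⊤ : ℕ∞) f₁ := hf₁.of_le (by simp)
  have hs₂ : ContDiff ℝ (⊤ : ℕ∞) f₂ := hf₂.of_le (by simp)
  have hsF : ContDiff ℝ (⊤ : ℕ∞) F := hF.of_le (by simp)
  have one_le : ((⊤ : ℕ∞) : WithTop ℕ∞) ≠ 0 := by simp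
  -- differentiability of iterated derivatives of f₁, f₂
  have hd₁1 : ContDiff ℝ (⊤ : ℕ∞) (deriv f₁) := (contDiff_infty_iff_deriv.mp hs₁).2
  have hd₁2 : ContDiff ℝ (⊤ : ℕ∞) (deriv (deriv f₁)) := (contDiff_infty_iff_deriv.mp hd₁1).2
  have hd₁3 : ContDiff ℝ (⊤ : ℕ∞) (deriv (deriv (deriv f₁))) :=
    (contDiff_infty_iff_deriv.mp hd₁2).2
  have hd₂1 : ContDiff ℝ (⊤ : ℕ∞) (deriv f₂) := (contDiff_infty_iff_deriv.mp hs₂).2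
  have hd₂2 : ContDiff ℝ (⊤ : ℕ∞) (deriv (deriv f₂)) := (contDiff_infty_iff_deriv.mp hd₂1).2
  have hd₂3 : ContDiff ℝ (⊤ : ℕ∞) (deriv (deriv (deriv f₂))) :=
    (contDiff_infty_iff_deriv.mp hd₂2).2
  have D₁0 := hs₁.differentiable one_le
  have D₁1 := hd₁1.differentiable one_le
  have D₁2 := hd₁2.differentiable one_le
  have D₁3 := hd₁3.differentiable one_le
  have D₂0 := hs₂.differentiable one_le
  have D₂1 := hd₂1.differentiable one_le
  have D₂2 := hd₂2.differentiable one_le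
  have D₂3 := hd₂3.differentiable one_le
  -- derivatives of g = f₁ f₂' - f₁' f₂
  set g : ℝ → ℝ := fun t => f₁ t * deriv f₂ t - deriv f₁ t * f₂ t with hg_def
  have dg : deriv g = fun t => f₁ t * deriv (deriv f₂) t - deriv (deriv f₁) t * f₂ t := by
    rw [hg_def, deriv_sub_fun (D₁0.fun_mul D₂1) (D₁1.fun_mul D₂0), deriv_mul_fun D₁0 D₂1,
      deriv_mul_fun D₁1 D₂0]
    funext t; ring
  have d2g : deriv (deriv g)
      = fun t => deriv f₁ t * deriv (deriv f₂) t + f₁ t * deriv (deriv (deriv f₂)) t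
        - (deriv (deriv (deriv f₁)) t * f₂ t + deriv (deriv f₁) t * deriv f₂ t) := by
    rw [dg, deriv_sub_fun (D₁0.fun_mul D₂2) (D₁2.fun_mul D₂0), deriv_mul_fun D₁0 D₂2,
      deriv_mul_fun D₁2 D₂0]
  have d3g : deriv (deriv (deriv g))
      = fun t => deriv (deriv f₁) t * deriv (deriv f₂) t
          + deriv f₁ t * deriv (deriv (deriv f₂)) t
          + (deriv f₁ t * deriv (deriv (deriv f₂)) t + f₁ t * deriv (deriv (deriv (deriv f₂))) t)
          - (deriv (deriv (deriv (deriv f₁))) t * f₂ t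
              + deriv (deriv (deriv f₁)) t * deriv f₂ t
            + (deriv (deriv (deriv f₁)) t * deriv f₂ t
                + deriv (deriv f₁) t * deriv (deriv f₂) t)) := by
    rw [d2g, deriv_sub_fun ((D₁1.fun_mul D₂2).fun_add (D₁0.fun_mul D₂3)) ((D₁3.fun_mul D₂0).fun_add (D₁2.fun_mul D₂1)),
      deriv_add_fun (D₁1.fun_mul D₂2) (D₁0.fun_mul D₂3), deriv_add_fun (D₁3.fun_mul D₂0) (D₁2.fun_mul D₂1),
      deriv_mul_fun D₁1 D₂2, deriv_mul_fun D₁0 D₂3, deriv_mul_fun D₁3 D₂0,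
      deriv_mul_fun D₁2 D₂1]
  -- smoothness infrastructure
  have hV₁ := contDiff_Vf hs₁
  have hV₂ := contDiff_Vf hs₂
  have hDF : ContDiff ℝ (⊤ : ℕ∞) (fderiv ℝ F) := hsF.fderiv_right le_rfl
  have hG₁ : ContDiff ℝ (⊤ : ℕ∞) (fun q => fderiv ℝ F q (Vf f₁ q)) := hDF.clm_apply hV₁
  have hG₂ : ContDiff ℝ (⊤ : ℕ∞) (fun q => fderiv ℝ F q (Vf f₂ q)) := hDF.clm_apply hV₂
  have hFd : ∀ q : P4, DifferentiableAt ℝ F q := fun q => (hsF.differentiable one_le) q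
  have e₁ : Zf f₁ F = fun q => fderiv ℝ F q (Vf f₁ q) := funext fun q => Zf_eq' f₁ (hFd q)
  have e₂ : Zf f₂ F = fun q => fderiv ℝ F q (Vf f₂ q) := funext fun q => Zf_eq' f₂ (hFd q)
  -- expand the iterated actions
  have hDFd : DifferentiableAt ℝ (fderiv ℝ F) p := (hDF.differentiable one_le) p
  have hV₁d : DifferentiableAt ℝ (Vf f₁) p := (hV₁.differentiable one_le) p
  have hV₂d : DifferentiableAt ℝ (Vf f₂) p := (hV₂.differentiable one_le) p
  have key₁ : Zf f₁ (Zf f₂ F) p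
      = fderiv ℝ F p (fderiv ℝ (Vf f₂) p (Vf f₁ p))
        + fderiv ℝ (fderiv ℝ F) p (Vf f₁ p) (Vf f₂ p) := by
    rw [e₂, Zf_eq' f₁ ((hG₂.differentiable one_le) p),
      fderiv_clm_apply hDFd hV₂d]
    simp [ContinuousLinearMap.add_apply, ContinuousLinearMap.comp_apply,
      ContinuousLinearMap.flip_apply]
  have key₂ : Zf f₂ (Zf f₁ F) p
      = fderiv ℝ F p (fderiv ℝ (Vf f₁) p (Vf f₂ p))
        + fderiv ℝ (fderiv ℝ F) p (Vf f₂ p) (Vf f₁ p) := by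
    rw [e₁, Zf_eq' f₂ ((hG₁.differentiable one_le) p),
      fderiv_clm_apply hDFd hV₁d]
    simp [ContinuousLinearMap.add_apply, ContinuousLinearMap.comp_apply,
      ContinuousLinearMap.flip_apply]
  have hsymm : fderiv ℝ (fderiv ℝ F) p (Vf f₁ p) (Vf f₂ p)
      = fderiv ℝ (fderiv ℝ F) p (Vf f₂ p) (Vf f₁ p) :=
    (hF.contDiffAt.isSymmSndFDerivAt (by simp; exact WithTop.coe_le_coe.mpr (le_top : (2 : ℕ∞) ≤ ⊤))) _ _
  have expand₂ := fderiv_Vf_apply hs₂ p (Vf f₁ p)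
  have expand₁ := fderiv_Vf_apply hs₁ p (Vf f₂ p)
  rw [key₁, key₂, hsymm, Zf_eq' g (hFd p), expand₂, expand₁]
  simp only [Vf]
  rw [fderiv_apply_vec (hFd p), fderiv_apply_vec (hFd p), fderiv_apply_vec (hFd p)]
  rw [d3g, d2g, dg]
  simp only [hg_def]
  ring
end

section
/- The map σ from the Lie algebra of smooth vector fields f(t)∂_t on an open interval I ⊆ ℝ (with bracket [f∂_t, g∂_t] = (f g' - f' g)∂_t) to the vector fields z_f on I × ℝ³ defined by σ(f ∂_t) = z_f is a Lie algebra homomorphism, i.e. σ([f∂_t, g∂_t]) = [σ(f∂_t), σ(g∂_t)]. -/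
noncomputable section

/-- The coefficient vector of the vector field z_f. -/
def Vfd (f : ℝ → ℝ) (p : P4) : P4 :=
  (f p.1,
   (1 / 6) * (2 * p.2.1 * deriv f p.1 + p.2.2.1 ^ 2 * deriv (deriv f) p.1),
   (2 * p.2.2.1 / 3) * deriv f p.1,
   (1 / 6) * (-4 * p.2.2.2 * deriv f p.1 - 2 * p.2.1 * deriv (deriv f) p.1
      - p.2.2.1 ^ 2 * deriv (deriv (deriv f)) p.1))

lemma Zf_eq_fderiv (f : ℝ → ℝ) (F : P4 → ℝ) (p : P4) (hF : DifferentiableAt ℝ F p) :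
    Zf f F p = fderiv ℝ F p (Vfd f p) := by
  have hF' := hF.hasFDerivAt
  have c1 : HasDerivAt (fun s : ℝ => ((s, p.2.1, p.2.2.1, p.2.2.2) : P4))
      ((1 : ℝ), (0 : ℝ), (0 : ℝ), (0 : ℝ)) p.1 :=
    HasDerivAt.prodMk (hasDerivAt_id _) (HasDerivAt.prodMk (hasDerivAt_const _ _)
      (HasDerivAt.prodMk (hasDerivAt_const _ _) (hasDerivAt_const _ _)))
  have c2 : HasDerivAt (fun s : ℝ => ((p.1, s, p.2.2.1, p.2.2.2) : P4))
      ((0 : ℝ), (1 : ℝ), (0 : ℝ), (0 : ℝ)) p.2.1 :=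
    HasDerivAt.prodMk (hasDerivAt_const _ _) (HasDerivAt.prodMk (hasDerivAt_id _)
      (HasDerivAt.prodMk (hasDerivAt_const _ _) (hasDerivAt_const _ _)))
  have c3 : HasDerivAt (fun s : ℝ => ((p.1, p.2.1, s, p.2.2.2) : P4))
      ((0 : ℝ), (0 : ℝ), (1 : ℝ), (0 : ℝ)) p.2.2.1 :=
    HasDerivAt.prodMk (hasDerivAt_const _ _) (HasDerivAt.prodMk (hasDerivAt_const _ _)
      (HasDerivAt.prodMk (hasDerivAt_id _) (hasDerivAt_const _ _)))
  have c4 : HasDerivAt (fun s : ℝ => ((p.1, p.2.1, p.2.2.1, s) : P4))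
      ((0 : ℝ), (0 : ℝ), (0 : ℝ), (1 : ℝ)) p.2.2.2 :=
    HasDerivAt.prodMk (hasDerivAt_const _ _) (HasDerivAt.prodMk (hasDerivAt_const _ _)
      (HasDerivAt.prodMk (hasDerivAt_const _ _) (hasDerivAt_id _)))
  have h1 : pdT F p = fderiv ℝ F p ((1 : ℝ), (0 : ℝ), (0 : ℝ), (0 : ℝ)) :=
    (hF'.comp_hasDerivAt_of_eq p.1 c1 (by simp)).deriv
  have h2 : pdX F p = fderiv ℝ F p ((0 : ℝ), (1 : ℝ), (0 : ℝ), (0 : ℝ)) :=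
    (hF'.comp_hasDerivAt_of_eq p.2.1 c2 (by simp)).deriv
  have h3 : pdY F p = fderiv ℝ F p ((0 : ℝ), (0 : ℝ), (1 : ℝ), (0 : ℝ)) :=
    (hF'.comp_hasDerivAt_of_eq p.2.2.1 c3 (by simp)).deriv
  have h4 : pdU F p = fderiv ℝ F p ((0 : ℝ), (0 : ℝ), (0 : ℝ), (1 : ℝ)) :=
    (hF'.comp_hasDerivAt_of_eq p.2.2.2 c4 (by simp)).deriv
  have hv : Vfd f p
      = (f p.1) • ((1 : ℝ), (0 : ℝ), (0 : ℝ), (0 : ℝ))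
      + ((1 / 6) * (2 * p.2.1 * deriv f p.1 + p.2.2.1 ^ 2 * deriv (deriv f) p.1))
          • ((0 : ℝ), (1 : ℝ), (0 : ℝ), (0 : ℝ))
      + ((2 * p.2.2.1 / 3) * deriv f p.1) • ((0 : ℝ), (0 : ℝ), (1 : ℝ), (0 : ℝ))
      + ((1 / 6) * (-4 * p.2.2.2 * deriv f p.1 - 2 * p.2.1 * deriv (deriv f) p.1
          - p.2.2.1 ^ 2 * deriv (deriv (deriv f)) p.1))
          • ((0 : ℝ), (0 : ℝ), (0 : ℝ), (1 : ℝ)) := by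
    simp [Vfd, Prod.ext_iff]
  rw [Zf, h1, h2, h3, h4, hv]
  simp only [map_add, map_smul, smul_eq_mul]

lemma deriv_smooth {f : ℝ → ℝ} (hf : ContDiff ℝ (⊤ : ℕ∞) f) :
    ContDiff ℝ (⊤ : ℕ∞) (deriv f) := (contDiff_infty_iff_deriv.mp hf).2

/-- Explicit derivative of the coefficient vector field. -/
lemma hasFDerivAt_Vfd (f : ℝ → ℝ) (hf : ContDiff ℝ (⊤ : ℕ∞) f) (p : P4) :
    ∃ L : P4 →L[ℝ] P4, HasFDerivAt (Vfd f) L p ∧ ∀ w : P4,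
      L w = (deriv f p.1 * w.1,
        (1 / 6) * ((2 * w.2.1 * deriv f p.1 + 2 * p.2.1 * deriv (deriv f) p.1 * w.1)
          + (2 * p.2.2.1 * w.2.2.1 * deriv (deriv f) p.1
              + p.2.2.1 ^ 2 * deriv (deriv (deriv f)) p.1 * w.1)),
        (2 * w.2.2.1 / 3) * deriv f p.1 + (2 * p.2.2.1 / 3) * deriv (deriv f) p.1 * w.1,
        (1 / 6) * ((-4 * w.2.2.2 * deriv f p.1 - 4 * p.2.2.2 * deriv (deriv f) p.1 * w.1)
          - (2 * w.2.1 * deriv (deriv f) p.1 + 2 * p.2.1 * deriv (deriv (deriv f)) p.1 * w.1)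
          - (2 * p.2.2.1 * w.2.2.1 * deriv (deriv (deriv f)) p.1
              + p.2.2.1 ^ 2 * deriv (deriv (deriv (deriv f))) p.1 * w.1))) := by
  set f1 := deriv f
  set f2 := deriv f1
  set f3 := deriv f2
  set f4 := deriv f3
  have hf1 : ContDiff ℝ (⊤ : ℕ∞) f1 := deriv_smooth hf
  have hf2 : ContDiff ℝ (⊤ : ℕ∞) f2 := deriv_smooth hf1
  have hf3 : ContDiff ℝ (⊤ : ℕ∞) f3 := deriv_smooth hf2
  have hT : HasFDerivAt (fun q : P4 => q.1) (ContinuousLinearMap.fst ℝ ℝ (ℝ × ℝ × ℝ)) p :=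
    hasFDerivAt_fst
  have hX : HasFDerivAt (fun q : P4 => q.2.1)
      ((ContinuousLinearMap.fst ℝ ℝ (ℝ × ℝ)).comp (ContinuousLinearMap.snd ℝ ℝ (ℝ × ℝ × ℝ))) p :=
    hasFDerivAt_fst.comp p hasFDerivAt_snd
  have hY : HasFDerivAt (fun q : P4 => q.2.2.1)
      (((ContinuousLinearMap.fst ℝ ℝ ℝ).comp (ContinuousLinearMap.snd ℝ ℝ (ℝ × ℝ))).comp
        (ContinuousLinearMap.snd ℝ ℝ (ℝ × ℝ × ℝ))) p :=
    (hasFDerivAt_fst.comp _ hasFDerivAt_snd).comp p hasFDerivAt_snd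
  have hU : HasFDerivAt (fun q : P4 => q.2.2.2)
      (((ContinuousLinearMap.snd ℝ ℝ ℝ).comp (ContinuousLinearMap.snd ℝ ℝ (ℝ × ℝ))).comp
        (ContinuousLinearMap.snd ℝ ℝ (ℝ × ℝ × ℝ))) p :=
    (hasFDerivAt_snd.comp _ hasFDerivAt_snd).comp p hasFDerivAt_snd
  have hF0 : HasFDerivAt (fun q : P4 => f q.1) _ p :=
    ((hf.differentiable (by simp) p.1).hasDerivAt).comp_hasFDerivAt p hT
  have hF1 : HasFDerivAt (fun q : P4 => f1 q.1) _ p :=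
    ((hf1.differentiable (by simp) p.1).hasDerivAt).comp_hasFDerivAt p hT
  have hF2 : HasFDerivAt (fun q : P4 => f2 q.1) _ p :=
    ((hf2.differentiable (by simp) p.1).hasDerivAt).comp_hasFDerivAt p hT
  have hF3 : HasFDerivAt (fun q : P4 => f3 q.1) _ p :=
    ((hf3.differentiable (by simp) p.1).hasDerivAt).comp_hasFDerivAt p hT
  have hC1 := hF0
  have hC2 : HasFDerivAt
      (fun q : P4 => (1 / 6) * (2 * q.2.1 * deriv f q.1 + q.2.2.1 * q.2.2.1 * deriv (deriv f) q.1)) _ p :=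
    (((hX.const_mul 2).mul hF1).add ((hY.mul hY).mul hF2)).const_mul (1 / 6)
  have hC3 : HasFDerivAt (fun q : P4 => (1 / 3) * (2 * q.2.2.1 * deriv f q.1)) _ p :=
    ((hY.const_mul 2).mul hF1).const_mul (1 / 3)
  have hC4 : HasFDerivAt
      (fun q : P4 => (1 / 6) * (-4 * q.2.2.2 * deriv f q.1 - 2 * q.2.1 * deriv (deriv f) q.1
        - q.2.2.1 * q.2.2.1 * deriv (deriv (deriv f)) q.1)) _ p :=
    ((((hU.const_mul (-4)).mul hF1).sub ((hX.const_mul 2).mul hF2)).sub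
      ((hY.mul hY).mul hF3)).const_mul (1 / 6)
  have hprod := HasFDerivAt.prodMk hC1 (HasFDerivAt.prodMk hC2 (HasFDerivAt.prodMk hC3 hC4))
  have hVeq : (fun q : P4 => (f q.1,
      (1 / 6) * (2 * q.2.1 * deriv f q.1 + q.2.2.1 * q.2.2.1 * deriv (deriv f) q.1),
      (1 / 3) * (2 * q.2.2.1 * deriv f q.1),
      (1 / 6) * (-4 * q.2.2.2 * deriv f q.1 - 2 * q.2.1 * deriv (deriv f) q.1
        - q.2.2.1 * q.2.2.1 * deriv (deriv (deriv f)) q.1))) = Vfd f := by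
    funext q
    simp only [Vfd, Prod.mk.injEq]
    exact ⟨trivial, by ring, by ring, by ring⟩
  rw [hVeq] at hprod
  refine ⟨_, hprod, fun w => ?_⟩
  simp only [ContinuousLinearMap.prod_apply, ContinuousLinearMap.add_apply,
    ContinuousLinearMap.coe_smul', ContinuousLinearMap.smul_apply, Pi.smul_apply,
    ContinuousLinearMap.coe_comp', Function.comp_apply, ContinuousLinearMap.coe_fst',
    ContinuousLinearMap.coe_snd', ContinuousLinearMap.sub_apply, smul_eq_mul]
  refine Prod.ext ?_ (Prod.ext ?_ (Prod.ext ?_ ?_)) <;> simp <;> ring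
  exact Or.inl rfl

end

/-- σ(f ∂_t) = z_f is a Lie algebra homomorphism: σ([f∂_t, g∂_t]) = [σ(f∂_t), σ(g∂_t)],
where [f∂_t, g∂_t] = (f g' - f' g) ∂_t, on the open interval I. -/
theorem stmt7 (I : Set ℝ) (hI : IsOpen I) (hI' : I.OrdConnected)
    (f g : ℝ → ℝ) (hf : ContDiff ℝ (⊤ : ℕ∞) f) (hg : ContDiff ℝ (⊤ : ℕ∞) g) :
    ∀ F : P4 → ℝ, ContDiff ℝ (⊤ : ℕ∞) F → ∀ p : P4, p.1 ∈ I →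
      Zf (fun t => f t * deriv g t - deriv f t * g t) F p
        = Zf f (Zf g F) p - Zf g (Zf f F) p := by
  intro F hF p _
  have hf' : ContDiff ℝ (⊤ : ℕ∞) f := hf.of_le (by simp)
  have hg' : ContDiff ℝ (⊤ : ℕ∞) g := hg.of_le (by simp)
  have hF' : ContDiff ℝ (⊤ : ℕ∞) F := hF.of_le (by simp)
  have hFd : Differentiable ℝ F := hF'.differentiable (by simp)
  have hDF : ContDiff ℝ (⊤ : ℕ∞) (fderiv ℝ F) := hF'.fderiv_right (by exact_mod_cast le_top)
  have hDFd : HasFDerivAt (fderiv ℝ F) (fderiv ℝ (fderiv ℝ F) p) p :=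
    (hDF.differentiable (by simp) p).hasFDerivAt
  obtain ⟨Lf, hLf, hLfw⟩ := hasFDerivAt_Vfd f hf' p
  obtain ⟨Lg, hLg, hLgw⟩ := hasFDerivAt_Vfd g hg' p
  -- rewrite the inner vector fields
  have hZg : Zf g F = fun q => fderiv ℝ F q (Vfd g q) :=
    funext fun q => Zf_eq_fderiv _ _ _ (hFd q)
  have hZf : Zf f F = fun q => fderiv ℝ F q (Vfd f q) :=
    funext fun q => Zf_eq_fderiv _ _ _ (hFd q)
  have hGg : HasFDerivAt (fun q => fderiv ℝ F q (Vfd g q))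
      ((fderiv ℝ F p).comp Lg + (fderiv ℝ (fderiv ℝ F) p).flip (Vfd g p)) p :=
    hDFd.clm_apply hLg
  have hGf : HasFDerivAt (fun q => fderiv ℝ F q (Vfd f q))
      ((fderiv ℝ F p).comp Lf + (fderiv ℝ (fderiv ℝ F) p).flip (Vfd f p)) p :=
    hDFd.clm_apply hLf
  have e1 : Zf f (Zf g F) p
      = fderiv ℝ F p (Lg (Vfd f p)) + fderiv ℝ (fderiv ℝ F) p (Vfd f p) (Vfd g p) := by
    rw [hZg, Zf_eq_fderiv _ _ _ hGg.differentiableAt, hGg.fderiv]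
    simp
  have e2 : Zf g (Zf f F) p
      = fderiv ℝ F p (Lf (Vfd g p)) + fderiv ℝ (fderiv ℝ F) p (Vfd g p) (Vfd f p) := by
    rw [hZf, Zf_eq_fderiv _ _ _ hGf.differentiableAt, hGf.fderiv]
    simp
  have hsymm : fderiv ℝ (fderiv ℝ F) p (Vfd f p) (Vfd g p)
      = fderiv ℝ (fderiv ℝ F) p (Vfd g p) (Vfd f p) :=
    second_derivative_symmetric (fun y => (hFd y).hasFDerivAt) hDFd _ _
  rw [Zf_eq_fderiv _ _ _ (hFd p), e1, e2, hsymm]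
  have goal2 : Vfd (fun t => f t * deriv g t - deriv f t * g t) p
      = Lg (Vfd f p) - Lf (Vfd g p) := by
    -- derivatives of the bracket function
    have hdf : ∀ (u : ℝ → ℝ), ContDiff ℝ (⊤ : ℕ∞) u → ∀ t, HasDerivAt u (deriv u t) t :=
      fun u hu t => (hu.differentiable (by simp) t).hasDerivAt
    have hf1 := deriv_smooth hf'; have hf2 := deriv_smooth hf1; have hf3 := deriv_smooth hf2
    have hg1 := deriv_smooth hg'; have hg2 := deriv_smooth hg1; have hg3 := deriv_smooth hg2
    have k1 : deriv (fun t => f t * deriv g t - deriv f t * g t)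
        = fun t => f t * deriv (deriv g) t - deriv (deriv f) t * g t := by
      funext t
      have h := ((hdf f hf' t).mul (hdf _ hg1 t)).sub ((hdf _ hf1 t).mul (hdf g hg' t))
      exact h.deriv.trans (by ring)
    have k2 : deriv (fun t => f t * deriv (deriv g) t - deriv (deriv f) t * g t)
        = fun t => (deriv f t * deriv (deriv g) t + f t * deriv (deriv (deriv g)) t)
            - (deriv (deriv (deriv f)) t * g t + deriv (deriv f) t * deriv g t) := by
      funext t
      have h := ((hdf f hf' t).mul (hdf _ hg2 t)).sub ((hdf _ hf2 t).mul (hdf g hg' t))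
      exact h.deriv.trans (by ring)
    have k3 : deriv (fun t => (deriv f t * deriv (deriv g) t + f t * deriv (deriv (deriv g)) t)
            - (deriv (deriv (deriv f)) t * g t + deriv (deriv f) t * deriv g t))
        = fun t => (deriv (deriv f) t * deriv (deriv g) t
              + deriv f t * deriv (deriv (deriv g)) t
              + (deriv f t * deriv (deriv (deriv g)) t + f t * deriv (deriv (deriv (deriv g))) t))
            - (deriv (deriv (deriv (deriv f))) t * g t
              + deriv (deriv (deriv f)) t * deriv g t
              + (deriv (deriv (deriv f)) t * deriv g t
                + deriv (deriv f) t * deriv (deriv g) t)) := by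
      funext t
      have h := (((hdf _ hf1 t).mul (hdf _ hg2 t)).add ((hdf f hf' t).mul (hdf _ hg3 t))).sub
        (((hdf _ hf3 t).mul (hdf g hg' t)).add ((hdf _ hf2 t).mul (hdf _ hg1 t)))
      exact h.deriv.trans (by ring)
    rw [hLgw, hLfw]
    simp only [Vfd, k1, k2, k3, Prod.mk_sub_mk]
    refine Prod.ext ?_ (Prod.ext ?_ (Prod.ext ?_ ?_)) <;> (simp only []; ring)
  rw [goal2, map_sub]
  ring
end

section
/- For integers m, n ≥ 3, the vector fields z_{t^m} and z_{t^n} (the ZK symmetry generators with f(t) = t^m and t^n) satisfy the Virasoro-type commutation relation [z_{t^m}, z_{t^n}] = (n - m) z_{t^{m+n-1}}. -/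
noncomputable section

def eT : P4 →L[ℝ] ℝ := ContinuousLinearMap.fst ℝ ℝ (ℝ×ℝ×ℝ)
def eX : P4 →L[ℝ] ℝ := (ContinuousLinearMap.fst ℝ ℝ (ℝ×ℝ)).comp (ContinuousLinearMap.snd ℝ ℝ (ℝ×ℝ×ℝ))
def eY : P4 →L[ℝ] ℝ := ((ContinuousLinearMap.fst ℝ ℝ ℝ).comp (ContinuousLinearMap.snd ℝ ℝ (ℝ×ℝ))).comp (ContinuousLinearMap.snd ℝ ℝ (ℝ×ℝ×ℝ))
def eU : P4 →L[ℝ] ℝ := ((ContinuousLinearMap.snd ℝ ℝ ℝ).comp (ContinuousLinearMap.snd ℝ ℝ (ℝ×ℝ))).comp (ContinuousLinearMap.snd ℝ ℝ (ℝ×ℝ×ℝ))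

@[simp] lemma eT_apply (w : P4) : eT w = w.1 := rfl
@[simp] lemma eX_apply (w : P4) : eX w = w.2.1 := rfl
@[simp] lemma eY_apply (w : P4) : eY w = w.2.2.1 := rfl
@[simp] lemma eU_apply (w : P4) : eU w = w.2.2.2 := rfl

lemma hT (p : P4) : HasFDerivAt (fun q : P4 => q.1) eT p := hasFDerivAt_fst
lemma hX (p : P4) : HasFDerivAt (fun q : P4 => q.2.1) eX p := hasFDerivAt_fst.comp p hasFDerivAt_snd
lemma hY (p : P4) : HasFDerivAt (fun q : P4 => q.2.2.1) eY p :=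
  (hasFDerivAt_fst.comp _ hasFDerivAt_snd).comp p hasFDerivAt_snd
lemma hU (p : P4) : HasFDerivAt (fun q : P4 => q.2.2.2) eU p :=
  (hasFDerivAt_snd.comp _ hasFDerivAt_snd).comp p hasFDerivAt_snd

lemma hPowT (k : ℕ) (p : P4) :
    HasFDerivAt (fun q : P4 => q.1 ^ k) (((k : ℝ) * p.1 ^ (k-1)) • eT) p := by
  have h := ((hasDerivAt_pow k p.1).hasFDerivAt).comp p (hT p)
  refine h.congr_fderiv ?_
  refine ContinuousLinearMap.ext fun w => ?_
  simp [mul_comm]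

lemma hY2 (p : P4) :
    HasFDerivAt (fun q : P4 => q.2.2.1 ^ 2) ((2 * p.2.2.1) • eY) p := by
  have h := ((hasDerivAt_pow 2 p.2.2.1).hasFDerivAt).comp p (hY p)
  refine h.congr_fderiv ?_
  refine ContinuousLinearMap.ext fun w => ?_
  simp [mul_comm]

/-- coefficient vector of z_{t^(3+a)} -/
def Vv (a : ℕ) (q : P4) : P4 :=
  (q.1 ^ (3+a),
   ((1/3) * (3+(a:ℝ))) * (q.2.1 * q.1 ^ (2+a)) + ((1/6) * (3+(a:ℝ)) * (2+(a:ℝ))) * (q.2.2.1 ^ 2 * q.1 ^ (1+a)),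
   ((2/3) * (3+(a:ℝ))) * (q.2.2.1 * q.1 ^ (2+a)),
   (-(2/3) * (3+(a:ℝ))) * (q.2.2.2 * q.1 ^ (2+a)) + (-(1/3) * (3+(a:ℝ)) * (2+(a:ℝ))) * (q.2.1 * q.1 ^ (1+a))
     + (-(1/6) * (3+(a:ℝ)) * (2+(a:ℝ)) * (1+(a:ℝ))) * (q.2.2.1 ^ 2 * q.1 ^ a))

/-- directional derivative of `Vv a` at p in direction w -/
def DV (a : ℕ) (p w : P4) : P4 :=
  ((3+(a:ℝ)) * p.1 ^ (2+a) * w.1,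
   ((1/3) * (3+(a:ℝ))) * (w.2.1 * p.1 ^ (2+a) + p.2.1 * ((2+(a:ℝ)) * p.1 ^ (1+a) * w.1))
     + ((1/6) * (3+(a:ℝ)) * (2+(a:ℝ))) * (2 * p.2.2.1 * w.2.2.1 * p.1 ^ (1+a) + p.2.2.1 ^ 2 * ((1+(a:ℝ)) * p.1 ^ a * w.1)),
   ((2/3) * (3+(a:ℝ))) * (w.2.2.1 * p.1 ^ (2+a) + p.2.2.1 * ((2+(a:ℝ)) * p.1 ^ (1+a) * w.1)),
   (-(2/3) * (3+(a:ℝ))) * (w.2.2.2 * p.1 ^ (2+a) + p.2.2.2 * ((2+(a:ℝ)) * p.1 ^ (1+a) * w.1))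
     + (-(1/3) * (3+(a:ℝ)) * (2+(a:ℝ))) * (w.2.1 * p.1 ^ (1+a) + p.2.1 * ((1+(a:ℝ)) * p.1 ^ a * w.1))
     + (-(1/6) * (3+(a:ℝ)) * (2+(a:ℝ)) * (1+(a:ℝ))) * (2 * p.2.2.1 * w.2.2.1 * p.1 ^ a + p.2.2.1 ^ 2 * ((a:ℝ) * p.1 ^ (a-1) * w.1)))

lemma hasV (a : ℕ) (p : P4) :
    ∃ L : P4 →L[ℝ] P4, HasFDerivAt (Vv a) L p ∧ ∀ w, L w = DV a p w := by
  have hL := (hPowT (3+a) p).prodMk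
      (((((hX p).mul (hPowT (2+a) p)).const_mul ((1/3) * (3+(a:ℝ)))).add
        (((hY2 p).mul (hPowT (1+a) p)).const_mul ((1/6) * (3+(a:ℝ)) * (2+(a:ℝ))))).prodMk
       ((((hY p).mul (hPowT (2+a) p)).const_mul ((2/3) * (3+(a:ℝ)))).prodMk
        (((((hU p).mul (hPowT (2+a) p)).const_mul (-(2/3) * (3+(a:ℝ)))).add
           (((hX p).mul (hPowT (1+a) p)).const_mul (-(1/3) * (3+(a:ℝ)) * (2+(a:ℝ))))).add
         (((hY2 p).mul (hPowT a p)).const_mul (-(1/6) * (3+(a:ℝ)) * (2+(a:ℝ)) * (1+(a:ℝ)))))))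
  refine ⟨_, hL, ?_⟩
  intro w
  simp only [DV, ContinuousLinearMap.prod_apply, ContinuousLinearMap.add_apply,
    ContinuousLinearMap.smul_apply, eT_apply, eX_apply, eY_apply, eU_apply, smul_eq_mul,
    Prod.mk.injEq]
  have h1 : (3:ℕ)+a-1 = 2+a := by omega
  have h2 : (2:ℕ)+a-1 = 1+a := by omega
  have h3 : (1:ℕ)+a-1 = a := by omega
  rw [h1, h2, h3]
  refine ⟨by push_cast; ring, by push_cast; ring, by push_cast; ring, by push_cast; ring⟩

lemma bracket (a b : ℕ) (p : P4) :
    DV b p (Vv a p) - DV a p (Vv b p) = ((b:ℝ) - (a:ℝ)) • Vv (a+b+2) p := by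
  rcases a with _ | a <;> rcases b with _ | b <;>
  · simp only [DV, Vv, Prod.mk_sub_mk, Prod.smul_mk, smul_eq_mul, Prod.mk.injEq,
      Nat.succ_sub_one, Nat.zero_sub, Nat.cast_zero, Nat.cast_succ, pow_zero]
    refine ⟨by push_cast; ring, by push_cast; ring, by push_cast; ring, by push_cast; ring⟩

lemma pdT_eq {G : P4 → ℝ} {L : P4 →L[ℝ] ℝ} {p : P4} (hG : HasFDerivAt G L p) :
    pdT G p = L (1,0,0,0) := by
  have hι : HasDerivAt (fun s : ℝ => ((s, p.2.1, p.2.2.1, p.2.2.2) : P4)) ((1,0,0,0) : P4) p.1 :=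
    (hasDerivAt_id p.1).prodMk ((hasDerivAt_const p.1 _))
  exact (hG.comp_hasDerivAt p.1 hι).deriv

lemma pdX_eq {G : P4 → ℝ} {L : P4 →L[ℝ] ℝ} {p : P4} (hG : HasFDerivAt G L p) :
    pdX G p = L (0,1,0,0) := by
  have hι : HasDerivAt (fun s : ℝ => ((p.1, s, p.2.2.1, p.2.2.2) : P4)) ((0,1,0,0) : P4) p.2.1 :=
    (hasDerivAt_const p.2.1 _).prodMk ((hasDerivAt_id p.2.1).prodMk (hasDerivAt_const p.2.1 _))
  exact (hG.comp_hasDerivAt p.2.1 hι).deriv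

lemma pdY_eq {G : P4 → ℝ} {L : P4 →L[ℝ] ℝ} {p : P4} (hG : HasFDerivAt G L p) :
    pdY G p = L (0,0,1,0) := by
  have hι : HasDerivAt (fun s : ℝ => ((p.1, p.2.1, s, p.2.2.2) : P4)) ((0,0,1,0) : P4) p.2.2.1 :=
    (hasDerivAt_const p.2.2.1 _).prodMk ((hasDerivAt_const p.2.2.1 _).prodMk
      ((hasDerivAt_id p.2.2.1).prodMk (hasDerivAt_const p.2.2.1 _)))
  exact (hG.comp_hasDerivAt p.2.2.1 hι).deriv

lemma pdU_eq {G : P4 → ℝ} {L : P4 →L[ℝ] ℝ} {p : P4} (hG : HasFDerivAt G L p) :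
    pdU G p = L (0,0,0,1) := by
  have hι : HasDerivAt (fun s : ℝ => ((p.1, p.2.1, p.2.2.1, s) : P4)) ((0,0,0,1) : P4) p.2.2.2 :=
    (hasDerivAt_const p.2.2.2 _).prodMk ((hasDerivAt_const p.2.2.2 _).prodMk
      ((hasDerivAt_const p.2.2.2 _).prodMk (hasDerivAt_id p.2.2.2)))
  exact (hG.comp_hasDerivAt p.2.2.2 hι).deriv

lemma clm_expand (L : P4 →L[ℝ] ℝ) (c1 c2 c3 c4 : ℝ) :
    L (c1, c2, c3, c4) = c1 * L (1,0,0,0) + c2 * L (0,1,0,0) + c3 * L (0,0,1,0) + c4 * L (0,0,0,1) := by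
  have h : ((c1,c2,c3,c4) : P4)
      = c1 • ((1,0,0,0) : P4) + c2 • ((0,1,0,0) : P4) + c3 • ((0,0,1,0) : P4) + c4 • ((0,0,0,1) : P4) := by
    simp [Prod.ext_iff]
  rw [h, map_add, map_add, map_add, map_smul, map_smul, map_smul, map_smul]
  simp [smul_eq_mul]

lemma dpow1 (a : ℕ) : deriv (fun t : ℝ => t ^ (3+a)) = fun t => (3+(a:ℝ)) * t ^ (2+a) := by
  funext t
  have h : 3+a-1 = 2+a := by omega
  rw [deriv_pow_field, h]; push_cast; ring

lemma dpow2 (a : ℕ) : deriv (deriv (fun t : ℝ => t ^ (3+a)))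
    = fun t => (3+(a:ℝ)) * ((2+(a:ℝ)) * t ^ (1+a)) := by
  rw [dpow1]; funext t
  have h : 2+a-1 = 1+a := by omega
  rw [deriv_const_mul_field, deriv_pow_field, h]; push_cast; ring

lemma dpow3 (a : ℕ) : deriv (deriv (deriv (fun t : ℝ => t ^ (3+a))))
    = fun t => (3+(a:ℝ)) * ((2+(a:ℝ)) * ((1+(a:ℝ)) * t ^ a)) := by
  rw [dpow2]; funext t
  have h : 1+a-1 = a := by omega
  rw [deriv_const_mul_field, deriv_const_mul_field, deriv_pow_field, h]; push_cast; ring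

lemma Zf_eq'_s8 (a : ℕ) {G : P4 → ℝ} {L : P4 →L[ℝ] ℝ} {p : P4} (hG : HasFDerivAt G L p) :
    Zf (fun t => t ^ (3+a)) G p = L (Vv a p) := by
  simp only [Zf]
  rw [dpow3 a, dpow2 a, dpow1 a]
  simp only [pdT_eq hG, pdX_eq hG, pdY_eq hG, pdU_eq hG, Vv]
  conv_rhs => rw [clm_expand]
  ring

end

theorem stmt8 (m n : ℕ) (hm : 3 ≤ m) (hn : 3 ≤ n) :
    ∀ F : P4 → ℝ, ContDiff ℝ (⊤ : ℕ∞) F → ∀ p : P4,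
      Zf (fun t => t ^ m) (Zf (fun t => t ^ n) F) p
        - Zf (fun t => t ^ n) (Zf (fun t => t ^ m) F) p
        = ((n : ℝ) - (m : ℝ)) * Zf (fun t => t ^ (m + n - 1)) F p := by
  obtain ⟨a, rfl⟩ := Nat.exists_eq_add_of_le hm
  obtain ⟨b, rfl⟩ := Nat.exists_eq_add_of_le hn
  intro F hF p
  have hd : ∀ q, HasFDerivAt F (fderiv ℝ F q) q := fun q =>
    (hF.differentiable (by simp) q).hasFDerivAt
  have hF' : ContDiff ℝ (⊤ : ℕ∞) (fderiv ℝ F) := hF.fderiv_right (by simp)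
  have hd2 : HasFDerivAt (fderiv ℝ F) (fderiv ℝ (fderiv ℝ F) p) p :=
    (hF'.differentiable (by simp) p).hasFDerivAt
  have hinner : ∀ k : ℕ, Zf (fun t => t ^ (3+k)) F = fun q => fderiv ℝ F q (Vv k q) :=
    fun k => funext fun q => Zf_eq'_s8 k (hd q)
  rw [hinner a, hinner b]
  obtain ⟨La, hLa, hwa⟩ := hasV a p
  obtain ⟨Lb, hLb, hwb⟩ := hasV b p
  have hGb : HasFDerivAt (fun q => fderiv ℝ F q (Vv b q))
      ((fderiv ℝ F p).comp Lb + (fderiv ℝ (fderiv ℝ F) p).flip (Vv b p)) p := hd2.clm_apply hLb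
  have hGa : HasFDerivAt (fun q => fderiv ℝ F q (Vv a q))
      ((fderiv ℝ F p).comp La + (fderiv ℝ (fderiv ℝ F) p).flip (Vv a p)) p := hd2.clm_apply hLa
  rw [Zf_eq'_s8 a hGb, Zf_eq'_s8 b hGa]
  have hexp : 3 + a + (3 + b) - 1 = 3 + (a + b + 2) := by omega
  simp only [hexp]
  rw [Zf_eq'_s8 (a+b+2) (hd p)]
  simp only [ContinuousLinearMap.add_apply, ContinuousLinearMap.coe_comp', Function.comp_apply,
    ContinuousLinearMap.flip_apply]
  rw [hwb (Vv a p), hwa (Vv b p)]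
  have hsymm := second_derivative_symmetric hd hd2 (Vv a p) (Vv b p)
  have hAB : fderiv ℝ F p (DV b p (Vv a p)) - fderiv ℝ F p (DV a p (Vv b p))
      = ((3+(b:ℝ)) - (3+(a:ℝ))) * fderiv ℝ F p (Vv (a+b+2) p) := by
    rw [← map_sub, bracket a b p, map_smul, smul_eq_mul]; ring
  push_cast
  linarith [hAB, hsymm]
end

section
/- Let g : ℝ → ℝ be smooth with g(t) ≠ 0 and g'(t) ≠ 0 for all t. Then the function u(t,x,y) = -y² g'(t) ( x/(y² g(t)) + g''(t)/(2 g(t) g'(t)) ) is an exact solution of the ZK equation u_{xt} - u_x² - u u_{xx} - u_{yy} = 0 at all points with y ≠ 0. -/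
theorem stmt10 (g : ℝ → ℝ) (hg : ContDiff ℝ (⊤ : ℕ∞) g)
    (hg0 : ∀ t : ℝ, g t ≠ 0) (hg1 : ∀ t : ℝ, deriv g t ≠ 0) :
    ∀ t x y : ℝ, y ≠ 0 →
      ZK (fun t x y =>
        -(y ^ 2) * deriv g t * (x / (y ^ 2 * g t) + deriv (deriv g) t / (2 * g t * deriv g t)))
        t x y = 0 := by
  intro t x y hy
  have hgi : ContDiff ℝ (⊤ : ℕ∞) g := hg.of_le (by simp)
  have hdg : ContDiff ℝ (⊤ : ℕ∞) (deriv g) := (contDiff_infty_iff_deriv.mp hgi).2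
  have hg' : ∀ s : ℝ, HasDerivAt g (deriv g s) s := fun s =>
    (hgi.differentiable (by simp) s).hasDerivAt
  have hdg' : ∀ s : ℝ, HasDerivAt (deriv g) (deriv (deriv g) s) s := fun s =>
    (hdg.differentiable (by simp) s).hasDerivAt
  set u : ℝ → ℝ → ℝ → ℝ := fun t x y =>
    -(y ^ 2) * deriv g t * (x / (y ^ 2 * g t) + deriv (deriv g) t / (2 * g t * deriv g t))
    with hu
  set v : ℝ → ℝ → ℝ → ℝ := fun t x y =>
    -(deriv g t) * x / g t - y ^ 2 * deriv (deriv g) t / (2 * g t) with hv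
  have huv : ∀ s x' y' : ℝ, y' ≠ 0 → u s x' y' = v s x' y' := by
    intro s x' y' hy'
    simp only [hu, hv]
    have h1 : y' ^ 2 ≠ 0 := pow_ne_zero _ hy'
    have e1 : -y' ^ 2 * deriv g s * (x' / (y' ^ 2 * g s)) = -(deriv g s * x') / g s := by
      rw [mul_div_assoc',
        show -y' ^ 2 * deriv g s * x' = y' ^ 2 * (-(deriv g s * x')) by ring]
      exact mul_div_mul_left _ _ h1
    have e2 : -y' ^ 2 * deriv g s * (deriv (deriv g) s / (2 * g s * deriv g s))
        = -(y' ^ 2 * deriv (deriv g) s / (2 * g s)) := by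
      rw [mul_div_assoc',
        show -y' ^ 2 * deriv g s * deriv (deriv g) s
          = deriv g s * (-(y' ^ 2 * deriv (deriv g) s)) by ring,
        show 2 * g s * deriv g s = deriv g s * (2 * g s) by ring,
        mul_div_mul_left _ _ (hg1 s), neg_div]
    rw [mul_add, e1, e2]
    ring
  -- derivative in x of v (affine in x)
  have hxv : ∀ s y' : ℝ, ∀ x0 : ℝ,
      HasDerivAt (fun x' => v s x' y') (-(deriv g s) / g s) x0 := by
    intro s y' x0
    have := (((hasDerivAt_id x0).const_mul (-(deriv g s))).div_const (g s)).sub_const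
      (y' ^ 2 * deriv (deriv g) s / (2 * g s))
    simpa [hv] using this
  have hxderiv : ∀ s : ℝ, deriv (fun x' => u s x' y) x = -(deriv g s) / g s := by
    intro s
    have : (fun x' => u s x' y) = fun x' => v s x' y := funext fun x' => huv s x' y hy
    rw [this]
    exact (hxv s y x).deriv
  -- t-term
  have htterm : deriv (fun s => deriv (fun x' => u s x' y) x) t
      = (-(deriv (deriv g) t) * g t - -(deriv g t) * deriv g t) / g t ^ 2 := by
    have heq : (fun s => deriv (fun x' => u s x' y) x) = fun s => -(deriv g s) / g s :=
      funext fun s => hxderiv s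
    rw [heq]
    exact (((hdg' t).neg).div (hg' t) (hg0 t)).deriv
  -- second x-derivative is 0
  have hxx : deriv (fun x' => deriv (fun x'' => u t x'' y) x') x = 0 := by
    have heq : (fun x' => deriv (fun x'' => u t x'' y) x') = fun _ => -(deriv g t) / g t := by
      funext x'
      have : (fun x'' => u t x'' y) = fun x'' => v t x'' y := funext fun x'' => huv t x'' y hy
      rw [this]
      exact (hxv t y x').deriv
    rw [heq, deriv_const]
  -- y derivatives
  have hyv : ∀ z : ℝ, HasDerivAt (fun y'' => v t x y'')
      (-(2 * z ^ 1 * deriv (deriv g) t / (2 * g t))) z := by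
    intro z
    have := (((hasDerivAt_pow 2 z).mul_const (deriv (deriv g) t)).div_const
      (2 * g t)).const_sub (-(deriv g t) * x / g t)
    simpa [hv] using this
  have hUV : (fun y'' => u t x y'') =ᶠ[nhds y] (fun y'' => v t x y'') := by
    filter_upwards [eventually_ne_nhds hy] with z hz using huv t x z hz
  have hdUV : deriv (fun y'' => u t x y'') =ᶠ[nhds y] deriv (fun y'' => v t x y'') :=
    hUV.deriv
  have hyterm : deriv (fun y' => deriv (fun y'' => u t x y'') y') y
      = -(deriv (deriv g) t / g t) := by
    have h1 : deriv (fun y' => deriv (fun y'' => u t x y'') y') y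
        = deriv (deriv (fun y'' => v t x y'')) y := hdUV.deriv_eq
    rw [h1]
    have h2 : deriv (fun y'' => v t x y'') = fun z => -(2 * z ^ 1 * deriv (deriv g) t / (2 * g t)) :=
      funext fun z => (hyv z).deriv
    rw [h2]
    have h3 : HasDerivAt (fun z : ℝ => -(2 * z ^ 1 * deriv (deriv g) t / (2 * g t)))
        (-(2 * deriv (deriv g) t / (2 * g t))) y := by
      have := ((((hasDerivAt_id y).const_mul 2).mul_const (deriv (deriv g) t)).div_const
        (2 * g t)).neg
      simpa [Pi.neg_def] using this
    rw [h3.deriv]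
    rw [mul_div_mul_left _ _ (two_ne_zero (α := ℝ))]
  -- assemble
  rw [show ZK u t x y = deriv (fun s => deriv (fun x' => u s x' y) x) t
      - (deriv (fun x' => u t x' y) x) ^ 2
      - u t x y * deriv (fun x' => deriv (fun x'' => u t x'' y) x') x
      - deriv (fun y' => deriv (fun y'' => u t x y'') y') y from rfl]
  rw [htterm, hxderiv t, hxx, hyterm]
  have h1 := hg0 t
  field_simp
  ring
end

section
/- Let g, w : ℝ → ℝ be smooth with g never zero, and let α ≠ 0 be a constant. Then u(t,x,y) = (w(t) - α g(t)² (2x g'(t) + y² g''(t))) / (2 α g(t)³) is an exact solution of the ZK equation u_{xt} - u_x² - u u_{xx} - u_{yy} = 0. -/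
theorem stmt11 (g w : ℝ → ℝ) (hg : ContDiff ℝ (⊤ : ℕ∞) g) (hw : ContDiff ℝ (⊤ : ℕ∞) w)
    (hg0 : ∀ t : ℝ, g t ≠ 0) (α : ℝ) (hα : α ≠ 0) :
    ∀ t x y : ℝ,
      ZK (fun t x y =>
        (w t - α * g t ^ 2 * (2 * x * deriv g t + y ^ 2 * deriv (deriv g) t))
          / (2 * α * g t ^ 3)) t x y = 0 := by
  intro t x y
  have hgd : Differentiable ℝ g := hg.differentiable (by simp)
  have hg'c := ContDiff.iterate_deriv 1 (hg.of_le (by simp))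
  rw [Function.iterate_one] at hg'c
  have hg'd : Differentiable ℝ (deriv g) := hg'c.differentiable (by simp)
  -- x-derivative is constant -g'/g
  have hx : ∀ s x0, deriv (fun x' =>
      (w s - α * g s ^ 2 * (2 * x' * deriv g s + y ^ 2 * deriv (deriv g) s))
          / (2 * α * g s ^ 3)) x0 = -(deriv g s / g s) := by
    intro s x0
    have heq : (fun x' =>
        (w s - α * g s ^ 2 * (2 * x' * deriv g s + y ^ 2 * deriv (deriv g) s))
          / (2 * α * g s ^ 3))
        = fun x' => (-(deriv g s / g s)) * x'
            + (w s - α * g s ^ 2 * (y ^ 2 * deriv (deriv g) s)) / (2 * α * g s ^ 3) := by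
      funext x'
      have := hg0 s
      field_simp
      ring
    rw [heq, deriv_add_const, deriv_const_mul_field' (v := fun x' : ℝ => x')]
    simp
  have hy : ∀ y0 : ℝ, deriv (fun y'' =>
      (w t - α * g t ^ 2 * (2 * x * deriv g t + y'' ^ 2 * deriv (deriv g) t))
          / (2 * α * g t ^ 3)) y0 = -(deriv (deriv g) t / g t) * y0 := by
    intro y0
    have heq : (fun y'' =>
        (w t - α * g t ^ 2 * (2 * x * deriv g t + y'' ^ 2 * deriv (deriv g) t))
          / (2 * α * g t ^ 3))
        = fun y'' => (-(deriv (deriv g) t / (2 * g t))) * y'' ^ 2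
            + (w t - α * g t ^ 2 * (2 * x * deriv g t)) / (2 * α * g t ^ 3) := by
      funext y''
      have := hg0 t
      field_simp
      ring
    rw [heq, deriv_add_const, deriv_const_mul_field' (v := fun y'' : ℝ => y'' ^ 2)]
    simp only [deriv_pow_field]
    have := hg0 t
    field_simp
    ring
  simp only [ZK, hx, hy, deriv_const']
  have h4 : deriv (fun y0 : ℝ => -(deriv (deriv g) t / g t) * y0) y
      = -(deriv (deriv g) t / g t) := by
    rw [deriv_const_mul_field' (v := fun y0 : ℝ => y0)]
    simp
  rw [h4]
  have h1 : deriv (fun s => -(deriv g s / g s)) t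
      = -((deriv (deriv g) t * g t - deriv g t * deriv g t) / g t ^ 2) := by
    rw [deriv.fun_neg]
    rw [deriv_fun_div (hg'd t) (hgd t) (hg0 t)]
  rw [h1]
  have hgt := hg0 t
  field_simp
  ring
end

section
/- Let f : ℝ → ℝ be smooth with f(t) ≠ 0 for all t. Then u(t,x,y) = (y²/(6 f²)) [ (2/3) f'² - ( (2x/y²) f' + f'' ) f ] = (1/(6 f²)) [ (2/3) y² f'² - (2x f' + y² f'') f ] is an exact solution of the ZK equation u_{xt} - u_x² - u u_{xx} - u_{yy} = 0. -/
theorem stmt12 (f : ℝ → ℝ) (hf : ContDiff ℝ (⊤ : ℕ∞) f) (hf0 : ∀ t : ℝ, f t ≠ 0) :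
    ∀ t x y : ℝ,
      ZK (fun t x y =>
        (1 / (6 * f t ^ 2)) * ((2 / 3) * y ^ 2 * deriv f t ^ 2
          - (2 * x * deriv f t + y ^ 2 * deriv (deriv f) t) * f t)) t x y = 0 := by
  intro t x y
  have hdf : Differentiable ℝ f := hf.differentiable (by simp)
  have hfi : ContDiff ℝ ((⊤ : ℕ∞) : WithTop ℕ∞) f := hf.of_le (by simp)
  have hf1 : ContDiff ℝ ((⊤ : ℕ∞) : WithTop ℕ∞) (deriv f) := (contDiff_infty_iff_deriv.mp hfi).2
  have hdf1 : Differentiable ℝ (deriv f) := (contDiff_infty_iff_deriv.mp hf1).1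
  -- x-derivative of u (in second arg) equals -(f')/(3 f)
  have h1 : ∀ s : ℝ, ∀ z : ℝ, deriv (fun x' =>
      (1 / (6 * f s ^ 2)) * ((2 / 3) * y ^ 2 * deriv f s ^ 2
        - (2 * x' * deriv f s + y ^ 2 * deriv (deriv f) s) * f s)) z
      = -(deriv f s) / (3 * f s) := by
    intro s z
    have e : (fun x' => (1 / (6 * f s ^ 2)) * ((2 / 3) * y ^ 2 * deriv f s ^ 2
        - (2 * x' * deriv f s + y ^ 2 * deriv (deriv f) s) * f s))
        = fun x' => (-(deriv f s * f s) / (3 * f s ^ 2)) * x'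
          + (1 / (6 * f s ^ 2)) * ((2 / 3) * y ^ 2 * deriv f s ^ 2
            - y ^ 2 * deriv (deriv f) s * f s) := by
      funext w; field_simp; ring
    rw [e, deriv_add_const, deriv_const_mul_field, deriv_id'']
    have hs := hf0 s
    field_simp
  -- time derivative of x-derivative
  have e2 : (fun s => deriv (fun x' =>
      (1 / (6 * f s ^ 2)) * ((2 / 3) * y ^ 2 * deriv f s ^ 2
        - (2 * x' * deriv f s + y ^ 2 * deriv (deriv f) s) * f s)) x)
      = fun s => -(deriv f s) / (3 * f s) := funext fun s => h1 s x
  have hnum : DifferentiableAt ℝ (fun s => -(deriv f s)) t := (hdf1 t).neg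
  have hden : DifferentiableAt ℝ (fun s => 3 * f s) t :=
    (hdf t).const_mul 3
  have hden0 : (3 : ℝ) * f t ≠ 0 := mul_ne_zero (by norm_num) (hf0 t)
  have h2 : deriv (fun s => -(deriv f s) / (3 * f s)) t
      = (-(deriv (deriv f) t) * (3 * f t) - -(deriv f t) * (3 * deriv f t))
        / (3 * f t) ^ 2 := by
    rw [deriv_fun_div hnum hden hden0, deriv.fun_neg, deriv_const_mul _ (hdf t)]
  -- y-derivatives
  have h3 : ∀ z : ℝ, deriv (fun y'' =>
      (1 / (6 * f t ^ 2)) * ((2 / 3) * y'' ^ 2 * deriv f t ^ 2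
        - (2 * x * deriv f t + y'' ^ 2 * deriv (deriv f) t) * f t)) z
      = ((1 / (6 * f t ^ 2)) * ((2 / 3) * deriv f t ^ 2
          - deriv (deriv f) t * f t) * 2) * z := by
    intro z
    have e : (fun y'' => (1 / (6 * f t ^ 2)) * ((2 / 3) * y'' ^ 2 * deriv f t ^ 2
        - (2 * x * deriv f t + y'' ^ 2 * deriv (deriv f) t) * f t))
        = fun y'' => ((1 / (6 * f t ^ 2)) * ((2 / 3) * deriv f t ^ 2
            - deriv (deriv f) t * f t)) * y'' ^ 2
          + (1 / (6 * f t ^ 2)) * (-(2 * x * deriv f t * f t)) := by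
      funext w; ring
    rw [e, deriv_add_const, deriv_const_mul_field, deriv_pow_field]
    ring
  have h4 : deriv (fun y' => deriv (fun y'' =>
      (1 / (6 * f t ^ 2)) * ((2 / 3) * y'' ^ 2 * deriv f t ^ 2
        - (2 * x * deriv f t + y'' ^ 2 * deriv (deriv f) t) * f t)) y') y
      = (1 / (6 * f t ^ 2)) * ((2 / 3) * deriv f t ^ 2
          - deriv (deriv f) t * f t) * 2 := by
    have e : (fun y' => deriv (fun y'' =>
        (1 / (6 * f t ^ 2)) * ((2 / 3) * y'' ^ 2 * deriv f t ^ 2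
          - (2 * x * deriv f t + y'' ^ 2 * deriv (deriv f) t) * f t)) y')
        = fun y' => ((1 / (6 * f t ^ 2)) * ((2 / 3) * deriv f t ^ 2
            - deriv (deriv f) t * f t) * 2) * y' := funext fun z => h3 z
    rw [e, deriv_const_mul_field, deriv_id'']
    ring
  -- assemble
  simp only [ZK]
  rw [e2, h2, h1 t x, h4]
  have euxx : (fun x' => deriv (fun x'' =>
      (1 / (6 * f t ^ 2)) * ((2 / 3) * y ^ 2 * deriv f t ^ 2
        - (2 * x'' * deriv f t + y ^ 2 * deriv (deriv f) t) * f t)) x')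
      = fun _ => -(deriv f t) / (3 * f t) := funext fun z => h1 t z
  rw [euxx, deriv_const]
  have hft := hf0 t
  field_simp
  ring
end

section
/- Let f : ℝ → ℝ be smooth and positive, K a constant, and define g(t) = ( f(t) exp(∫₀ᵗ K/f(s) ds) )^{1/3}. Then g satisfies the integrability condition -3 f g'² - g² f'' + 3 g (f' g' + f g'') = 0, equivalently 3 f (g'/g) - f' = K. -/
theorem stmt14 (f g : ℝ → ℝ) (hf : ContDiff ℝ (⊤ : ℕ∞) f) (hf0 : ∀ t : ℝ, 0 < f t)
    (K : ℝ)
    (hg : ∀ t : ℝ, g t = (f t * Real.exp (∫ s in (0 : ℝ)..t, K / f s)) ^ ((1 : ℝ) / 3)) :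
    ∀ t : ℝ,
      (-3 * f t * deriv g t ^ 2 - g t ^ 2 * deriv (deriv f) t
        + 3 * g t * (deriv f t * deriv g t + f t * deriv (deriv g) t) = 0)
      ∧ 3 * f t * (deriv g t / g t) - deriv f t = K := by
  have hfd : Differentiable ℝ f := hf.differentiable (by simp)
  have hfi : ContDiff ℝ (↑(⊤ : ℕ∞)) f := hf.of_le (by simp)
  have hfd' : Differentiable ℝ (deriv f) :=
    (contDiff_infty_iff_deriv.mp hfi).2.differentiable (by simp)
  have hfne : ∀ t, f t ≠ 0 := fun t => (hf0 t).ne'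
  have hc : Continuous (fun s => K / f s) := continuous_const.div hf.continuous hfne
  set I : ℝ → ℝ := fun t => ∫ s in (0:ℝ)..t, K / f s with hIdef
  have hId : ∀ t, HasDerivAt I (K / f t) t := fun t =>
    (hc.integral_hasStrictDerivAt 0 t).hasDerivAt
  have hgeq : g = fun t => (f t * Real.exp (I t)) ^ ((1:ℝ)/3) := funext hg
  subst hgeq
  set g : ℝ → ℝ := fun t => (f t * Real.exp (I t)) ^ ((1:ℝ)/3) with hgdef
  have hh0 : ∀ t, 0 < f t * Real.exp (I t) := fun t => mul_pos (hf0 t) (Real.exp_pos _)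
  have hg0 : ∀ t, 0 < g t := fun t => Real.rpow_pos_of_pos (hh0 t) _
  have hgd : ∀ t, HasDerivAt g (g t * (deriv f t + K) / (3 * f t)) t := by
    intro t
    have h1 : HasDerivAt (fun t => f t * Real.exp (I t))
        ((deriv f t + K) * Real.exp (I t)) t := by
      have := ((hfd t).hasDerivAt).mul ((hId t).exp)
      refine this.congr_deriv ?_
      field_simp [hfne t]
    have h2 := h1.rpow_const (p := (1:ℝ)/3) (Or.inl (hh0 t).ne')
    convert h2 using 1
    rw [show ((1:ℝ)/3 - 1) = (1/3) + (-1) by ring, Real.rpow_add (hh0 t),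
      Real.rpow_neg_one]
    rw [hgdef]
    field_simp [hfne t, Real.exp_ne_zero]
  have hgderiv : deriv g = fun t => g t * (deriv f t + K) / (3 * f t) :=
    funext fun t => (hgd t).deriv
  have hgdd : ∀ t, HasDerivAt (deriv g)
      ((((g t * (deriv f t + K) / (3 * f t)) * (deriv f t + K)
          + g t * deriv (deriv f) t) * (3 * f t)
        - g t * (deriv f t + K) * (3 * deriv f t)) / (3 * f t)^2) t := by
    intro t
    rw [hgderiv]
    have hnum : HasDerivAt (fun t => g t * (deriv f t + K))
        ((g t * (deriv f t + K) / (3 * f t)) * (deriv f t + K)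
          + g t * deriv (deriv f) t) t :=
      (hgd t).mul (((hfd' t).hasDerivAt).add_const K)
    have hden : HasDerivAt (fun t => 3 * f t) (3 * deriv f t) t :=
      ((hfd t).hasDerivAt).const_mul 3
    exact hnum.div hden (by have := hf0 t; positivity)
  intro t
  have e1 : deriv g t = g t * (deriv f t + K) / (3 * f t) := (hgd t).deriv
  have e2 := (hgdd t).deriv
  constructor
  · rw [e1, e2]
    have hf' := hfne t
    have hg' := (hg0 t).ne'
    field_simp
    ring
  · rw [e1]
    have hf' := hfne t
    have hg' := (hg0 t).ne'
    field_simp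
    ring
end

section
/- Let f : ℝ → ℝ be smooth and positive, K a constant, C > 0, and define h(t) = C ( f(t)² exp(-∫₀ᵗ K/f(s) ds) )^{1/3}. Then h satisfies (2f' - K)/(3f) = h'/h, and consequently the integrability condition 3 f h'² + 2 h² f'' - 3 h (f' h' + f h'') = 0. -/
theorem stmt15 (f h : ℝ → ℝ) (hf : ContDiff ℝ (⊤ : ℕ∞) f) (hf0 : ∀ t : ℝ, 0 < f t)
    (K C : ℝ) (hC : 0 < C)
    (hh : ∀ t : ℝ, h t = C * (f t ^ 2 * Real.exp (-∫ s in (0 : ℝ)..t, K / f s)) ^ ((1 : ℝ) / 3)) :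
    ∀ t : ℝ,
      ((2 * deriv f t - K) / (3 * f t) = deriv h t / h t)
      ∧ 3 * f t * deriv h t ^ 2 + 2 * h t ^ 2 * deriv (deriv f) t
          - 3 * h t * (deriv f t * deriv h t + f t * deriv (deriv h) t) = 0 := by
  -- basic facts about f
  have hfd : Differentiable ℝ f := hf.differentiable (by simp)
  have hfd1' : Differentiable ℝ (deriv f) := by
    have h1 := (contDiff_infty_iff_deriv.mp (hf.of_le (by simp))).2
    exact h1.differentiable (by simp)
  have hfne : ∀ t, f t ≠ 0 := fun t => (hf0 t).ne'
  -- auxiliary functions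
  set I : ℝ → ℝ := fun t => ∫ s in (0:ℝ)..t, K / f s with hI_def
  set g : ℝ → ℝ := fun t => f t ^ 2 * Real.exp (-I t) with hg_def
  have hg_pos : ∀ t, 0 < g t := fun t =>
    mul_pos (pow_pos (hf0 t) 2) (Real.exp_pos _)
  have hcont : Continuous fun s => K / f s :=
    continuous_const.div hf.continuous (fun s => (hf0 s).ne')
  have hI : ∀ t, HasDerivAt I (K / f t) t := fun t =>
    intervalIntegral.integral_hasDerivAt_right (hcont.intervalIntegrable _ _)
      (hcont.stronglyMeasurableAtFilter _ _) hcont.continuousAt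
  have hg : ∀ t, HasDerivAt g (f t * Real.exp (-I t) * (2 * deriv f t - K)) t := by
    intro t
    have h1 : HasDerivAt (fun t => f t ^ 2) (2 * f t * deriv f t) t := by
      simpa using ((hfd t).hasDerivAt.fun_pow 2)
    have h2 : HasDerivAt (fun t => Real.exp (-I t)) (Real.exp (-I t) * (-(K / f t))) t :=
      ((hI t).neg).exp
    have := h1.fun_mul h2
    refine this.congr_deriv ?_
    field_simp [hfne t]
    ring
  set u : ℝ → ℝ := fun t => (2 * deriv f t - K) / (3 * f t) with hu_def
  have hhd : ∀ t, HasDerivAt h (h t * u t) t := by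
    intro t
    have h3 : HasDerivAt (fun t => C * g t ^ ((1:ℝ)/3))
        (C * ((f t * Real.exp (-I t) * (2 * deriv f t - K)) * ((1:ℝ)/3) * g t ^ ((1:ℝ)/3 - 1))) t :=
      (((hg t).rpow_const (Or.inl (hg_pos t).ne'))).const_mul C
    have hfun : h = fun t => C * g t ^ ((1:ℝ)/3) := funext fun t => hh t
    rw [hfun]
    convert h3 using 1
    have hsub : g t ^ ((1:ℝ)/3 - 1) = g t ^ ((1:ℝ)/3) / g t := by
      rw [Real.rpow_sub (hg_pos t), Real.rpow_one]
    show C * (g t ^ ((1:ℝ)/3)) * u t = _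
    rw [hsub, hu_def]
    show C * g t ^ ((1:ℝ)/3) * ((2 * deriv f t - K) / (3 * f t)) = _
    have hgg : g t = f t ^ 2 * Real.exp (-I t) := rfl
    rw [hgg]
    field_simp [hfne t, (Real.exp_pos (-I t)).ne']
  have hh_pos : ∀ t, 0 < h t := fun t => by
    rw [hh t]; exact mul_pos hC (Real.rpow_pos_of_pos (hg_pos t) _)
  have hderiv_h : deriv h = fun t => h t * u t := funext fun t => (hhd t).deriv
  -- u is differentiable
  have hu : ∀ t, HasDerivAt u
      ((2 * deriv (deriv f) t * (3 * f t) - (2 * deriv f t - K) * (3 * deriv f t))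
        / (3 * f t) ^ 2) t := by
    intro t
    have h1 : HasDerivAt (fun t => 2 * deriv f t - K) (2 * deriv (deriv f) t) t := by
      simpa using (((hfd1' t).hasDerivAt.const_mul 2).sub_const K)
    have h2 : HasDerivAt (fun t => 3 * f t) (3 * deriv f t) t :=
      (hfd t).hasDerivAt.const_mul 3
    exact h1.div h2 (by have := hf0 t; positivity)
  have hh2 : ∀ t, HasDerivAt (deriv h)
      (h t * u t * u t + h t *
        ((2 * deriv (deriv f) t * (3 * f t) - (2 * deriv f t - K) * (3 * deriv f t))
          / (3 * f t) ^ 2)) t := by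
    intro t
    rw [hderiv_h]
    exact (hhd t).mul (hu t)
  intro t
  have e1 : deriv h t = h t * u t := (hhd t).deriv
  have e2 : deriv (deriv h) t = h t * u t * u t + h t *
      ((2 * deriv (deriv f) t * (3 * f t) - (2 * deriv f t - K) * (3 * deriv f t))
        / (3 * f t) ^ 2) := (hh2 t).deriv
  constructor
  · rw [e1, mul_div_cancel_left₀ _ (hh_pos t).ne']
  · rw [e1, e2, hu_def]
    have h3f : (3 : ℝ) * f t ≠ 0 := by have := hf0 t; positivity
    field_simp [hfne t]
    ring
end

section
/- Suppose the smooth function H = F(y) satisfies the implicit polynomial relation a H³ - y³ + 54 H y³ - 23328 H³ y³ = 0 on an interval where the relation can be differentiated (i.e. the partial derivative with respect to H is nonzero), with a a constant. Then H satisfies the ODE -H + 18 H² + 648 H³ + y H' = 0. -/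
theorem stmt19 (a : ℝ) (H : ℝ → ℝ) (hH : ContDiff ℝ (⊤ : ℕ∞) H)
    (s : Set ℝ) (hs : IsOpen s)
    (hrel : ∀ y ∈ s, a * H y ^ 3 - y ^ 3 + 54 * H y * y ^ 3 - 23328 * H y ^ 3 * y ^ 3 = 0)
    (hnz : ∀ y ∈ s, 3 * a * H y ^ 2 + 54 * y ^ 3 - 69984 * H y ^ 2 * y ^ 3 ≠ 0) :
    ∀ y ∈ s, -H y + 18 * H y ^ 2 + 648 * H y ^ 3 + y * deriv H y = 0 := by
  intro y hy
  have hd : HasDerivAt H (deriv H y) y :=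
    ((hH.differentiable (by simp)) y).hasDerivAt
  set H' := deriv H y with hH'
  have h1 : HasDerivAt (fun z => H z ^ 3) (3 * H y ^ 2 * H') y := by
    simpa using hd.fun_pow 3
  have h2 : HasDerivAt (fun z : ℝ => z ^ 3) (3 * y ^ 2) y := by
    simpa using hasDerivAt_pow 3 y
  have hg : HasDerivAt
      (fun z => a * H z ^ 3 - z ^ 3 + 54 * H z * z ^ 3 - 23328 * H z ^ 3 * z ^ 3)
      (a * (3 * H y ^ 2 * H') - 3 * y ^ 2
        + 54 * (H' * y ^ 3 + H y * (3 * y ^ 2))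
        - 23328 * ((3 * H y ^ 2 * H') * y ^ 3 + H y ^ 3 * (3 * y ^ 2))) y := by
    simpa [mul_assoc] using (((h1.const_mul a).fun_sub h2).fun_add ((hd.fun_mul h2).const_mul 54)).fun_sub
      ((h1.fun_mul h2).const_mul 23328)
  have he : (fun z => a * H z ^ 3 - z ^ 3 + 54 * H z * z ^ 3 - 23328 * H z ^ 3 * z ^ 3)
      =ᶠ[nhds y] fun _ => (0 : ℝ) := by
    filter_upwards [hs.mem_nhds hy] with z hz using hrel z hz
  have hg0 : HasDerivAt
      (fun z => a * H z ^ 3 - z ^ 3 + 54 * H z * z ^ 3 - 23328 * H z ^ 3 * z ^ 3)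
      0 y := (hasDerivAt_const y (0 : ℝ)).congr_of_eventuallyEq he
  have hE : a * (3 * H y ^ 2 * H') - 3 * y ^ 2
      + 54 * (H' * y ^ 3 + H y * (3 * y ^ 2))
      - 23328 * ((3 * H y ^ 2 * H') * y ^ 3 + H y ^ 3 * (3 * y ^ 2)) = 0 :=
    hg.unique hg0
  have hD := hnz y hy
  have key : (-H y + 18 * H y ^ 2 + 648 * H y ^ 3 + y * H') *
      (3 * a * H y ^ 2 + 54 * y ^ 3 - 69984 * H y ^ 2 * y ^ 3) = 0 := by
    linear_combination y * hE + (-3 + 54 * H y + 1944 * H y ^ 2) * hrel y hy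
  rcases mul_eq_zero.1 key with h | h
  · exact h
  · exact absurd h hD
end
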